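/- arXiv:1812.08212 — 8 statements merged into one kernel-verified Lean document; each statement's English description precedes it below -/
import Mathlib

section
/- Let R be a nontrivial commutative ring with identity having more than one nonzero zero-divisor. If the extended zero-divisor graph Γ̃(R) is not complete, then the diameter of the zero-divisor graph Γ(R) equals 3. -/
/-- The set of zero-divisors of a commutative ring (including `0`). -/
def zdSet (R : Type*) [CommRing R] : Set R :=
  {x : R | ∃ y : R, y ≠ 0 ∧ x * y = 0}

/-- The set of nonzero zero-divisors. -/
def zdStar (R : Type*) [CommRing R] : Set R :=
  {x : R | x ≠ 0 ∧ ∃ y : R, y ≠ 0 ∧ x * y = 0}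

/-- The zero-divisor graph `Γ(R)`: vertices are the nonzero zero-divisors, and distinct
`x`, `y` are adjacent iff `x * y = 0`. -/
def zdGraph (R : Type*) [CommRing R] : SimpleGraph (zdStar R) where
  Adj x y := x.1 ≠ y.1 ∧ x.1 * y.1 = 0
  symm := ⟨fun x y h => ⟨h.1.symm, by rw [mul_comm]; exact h.2⟩⟩
  loopless := ⟨fun x h => h.1 rfl⟩

/-- The extended zero-divisor graph `Γ̃(R)`: vertices are the nonzero zero-divisors, and
distinct `x`, `y` are adjacent iff `x * y = 0` or `x + y ∈ Z(R)`. -/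
def zdExtGraph (R : Type*) [CommRing R] : SimpleGraph (zdStar R) where
  Adj x y := x.1 ≠ y.1 ∧ (x.1 * y.1 = 0 ∨ x.1 + y.1 ∈ zdSet R)
  symm := ⟨fun x y h => ⟨h.1.symm, by rw [mul_comm, add_comm]; exact h.2⟩⟩
  loopless := ⟨fun x h => h.1 rfl⟩

/-!
Any two vertices `x, y` of `Γ(R)` are joined by a walk of length at most `3`: if `xa = 0` and
`yb = 0` with `a, b ≠ 0`, then either `ab = 0` and `x, a, b, y` works, or `ab` is a common
neighbour of `x` and `y`. Conversely, a common neighbour `z` of `x` and `y` annihilates `x + y`,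
so two vertices that are not adjacent in `Γ̃(R)` are at distance at least `3` in `Γ(R)`.
-/

universe u

open SimpleGraph

section ZeroDivisorGraph

variable {R : Type*} [CommRing R]

lemma mem_zdStar_of_mul_eq_zero {a x : R} (ha : a ≠ 0) (hx : x ≠ 0) (h : a * x = 0) :
    a ∈ zdStar R :=
  ⟨ha, x, hx, h⟩

lemma zdGraph_edist_le_one {x y : zdStar R} (h : x.1 * y.1 = 0) : (zdGraph R).edist x y ≤ 1 :=
  edist_le_one_iff_adj_or_eq.2 <|
    (eq_or_ne x y).symm.imp (fun hne => ⟨Subtype.coe_injective.ne hne, h⟩) id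

lemma zdGraph_edist_le_three (x y : zdStar R) : (zdGraph R).edist x y ≤ 3 := by
  obtain ⟨hx, a, ha, hxa⟩ := x.2
  obtain ⟨hy, b, hb, hyb⟩ := y.2
  let a' : zdStar R := ⟨a, mem_zdStar_of_mul_eq_zero ha hx (by rw [mul_comm, hxa])⟩
  let b' : zdStar R := ⟨b, mem_zdStar_of_mul_eq_zero hb hy (by rw [mul_comm, hyb])⟩
  by_cases hab : a * b = 0
  · calc (zdGraph R).edist x y
        ≤ (zdGraph R).edist x a' + (zdGraph R).edist a' b' + (zdGraph R).edist b' y :=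
          SimpleGraph.edist_triangle.trans (add_le_add_left SimpleGraph.edist_triangle _)
      _ ≤ 1 + 1 + 1 := by
          gcongr
          exacts [zdGraph_edist_le_one hxa, zdGraph_edist_le_one hab,
            zdGraph_edist_le_one (by rw [mul_comm, hyb])]
      _ = 3 := by norm_num
  · let c : zdStar R :=
      ⟨a * b, mem_zdStar_of_mul_eq_zero hab hx (by linear_combination b * hxa)⟩
    calc (zdGraph R).edist x y ≤ (zdGraph R).edist x c + (zdGraph R).edist c y :=
        SimpleGraph.edist_triangle
      _ ≤ 1 + 1 := by
          gcongr
          exacts [zdGraph_edist_le_one (by linear_combination b * hxa),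
            zdGraph_edist_le_one (by linear_combination a * hyb)]
      _ ≤ 3 := by norm_num

lemma zdGraph_ediam_le_three : (zdGraph R).ediam ≤ 3 :=
  ediam_le_of_edist_le zdGraph_edist_le_three

lemma zdExtGraph_adj_of_edist_le_two {x y : zdStar R} (hne : x ≠ y)
    (h : (zdGraph R).edist x y ≤ 2) : (zdExtGraph R).Adj x y := by
  have hne' : x.1 ≠ y.1 := Subtype.coe_injective.ne hne
  by_contra hn
  have hnadj : ¬ (zdGraph R).Adj x y := fun hadj => hn ⟨hne', .inl hadj.2⟩
  have hnocommon : (zdGraph R).commonNeighbors x y = ∅ :=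
    Set.eq_empty_iff_forall_notMem.2 fun z ⟨hxz, hyz⟩ =>
      hn ⟨hne', .inr ⟨z.1, z.2.1, by linear_combination hxz.2 + hyz.2⟩⟩
  exact h.not_gt (two_lt_edist_iff.2 ⟨hne, hnadj, hnocommon⟩)

end ZeroDivisorGraph

theorem stmt0_general (R : Type u) [CommRing R]
    (hnc : ¬ ∀ x y : zdStar R, x ≠ y → (zdExtGraph R).Adj x y) :
    (zdGraph R).ediam = 3 := by
  push Not at hnc
  obtain ⟨x, y, hne, hxy⟩ := hnc
  have h2 : 2 < (zdGraph R).edist x y :=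
    not_le.1 fun h => hxy (zdExtGraph_adj_of_edist_le_two hne h)
  exact zdGraph_ediam_le_three.antisymm ((Order.add_one_le_of_lt h2).trans edist_le_ediam)

theorem stmt0 (R : Type u) [CommRing R] [Nontrivial R]
    (hcard : (zdStar R).Nontrivial)
    (hnc : ¬ ∀ x y : zdStar R, x ≠ y → (zdExtGraph R).Adj x y) :
    (zdGraph R).ediam = 3 :=
  stmt0_general R hnc
end

section
/- Let R be a nontrivial commutative ring with identity having more than one nonzero zero-divisor. If Z(R) is not an ideal of R, R is not a Boolean ring, and R is not isomorphic to a subring of a product of two integral domains, then the diameter of the zero-divisor graph Γ(R) equals 3. -/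
universe u

/-- From `edist ≤ 2` extract: equal, adjacent, or a common neighbor. -/
lemma edist_le_two_cases {V : Type*} (G : SimpleGraph V) (u v : V)
    (h : G.edist u v ≤ 2) :
    u = v ∨ G.Adj u v ∨ ∃ z, G.Adj u z ∧ G.Adj z v := by
  have hne : G.edist u v ≠ ⊤ := by
    intro h'
    rw [h'] at h
    exact (by simp at h)
  obtain ⟨p, hp⟩ := SimpleGraph.exists_walk_of_edist_ne_top hne
  have hl : p.length ≤ 2 := by
    have : (p.length : ℕ∞) ≤ 2 := by rw [hp]; exact h
    exact_mod_cast this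
  match p, hl with
  | .nil, _ => exact Or.inl rfl
  | .cons h1 .nil, _ => exact Or.inr (Or.inl h1)
  | .cons h1 (.cons h2 .nil), _ => exact Or.inr (Or.inr ⟨_, h1, h2⟩)
  | .cons _ (.cons _ (.cons _ q)), hl =>
    exact absurd hl (by simp [SimpleGraph.Walk.length_cons])

theorem stmt1 (R : Type u) [CommRing R] [Nontrivial R]
    (hcard : (zdStar R).Nontrivial)
    (hideal : ¬ (∃ I : Ideal R, (I : Set R) = zdSet R))
    (hbool : ¬ (∀ x : R, x * x = x))
    (hsub : ¬ (∃ (D₁ : Type u) (D₂ : Type u) (_ : CommRing D₁) (_ : CommRing D₂)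
      (_ : IsDomain D₁) (_ : IsDomain D₂) (f : R →+* D₁ × D₂), Function.Injective f)) :
    (zdGraph R).ediam = 3 := by
  classical
  -- Upper bound: diameter at most 3 (Anderson–Livingston).
  have hub : ∀ u v : zdStar R, (zdGraph R).edist u v ≤ 3 := by
    intro u v
    by_cases huv : u = v
    · subst huv
      simp
    have hvalne : u.1 ≠ v.1 := fun h => huv (Subtype.ext h)
    by_cases hadj : u.1 * v.1 = 0
    · have hA : (zdGraph R).Adj u v := ⟨hvalne, hadj⟩
      refine le_trans ?_ (by norm_num : (1:ℕ∞) ≤ 3)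
      simpa using SimpleGraph.edist_le (SimpleGraph.Walk.cons hA SimpleGraph.Walk.nil)
    · obtain ⟨p, hp0, hup⟩ := u.2.2
      obtain ⟨q, hq0, hvq⟩ := v.2.2
      have hu0 : u.1 ≠ 0 := u.2.1
      have hv0 : v.1 ≠ 0 := v.2.1
      have hpmem : p ∈ zdStar R := ⟨hp0, u.1, hu0, by rw [mul_comm]; exact hup⟩
      have hqmem : q ∈ zdStar R := ⟨hq0, v.1, hv0, by rw [mul_comm]; exact hvq⟩
      by_cases hvp : v.1 * p = 0
      · -- u - p - v
        have h1 : (zdGraph R).Adj u ⟨p, hpmem⟩ := by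
          refine ⟨?_, hup⟩
          intro h
          have h' : (u : R) = p := h
          apply hadj
          rw [h']
          linear_combination hvp
        have h2 : (zdGraph R).Adj (⟨p, hpmem⟩ : zdStar R) v := by
          refine ⟨?_, by linear_combination hvp⟩
          intro h
          have h' : p = (v : R) := h
          apply hadj
          rw [← h']
          exact hup
        refine le_trans ?_ (by norm_num : (2:ℕ∞) ≤ 3)
        simpa using SimpleGraph.edist_le
          (SimpleGraph.Walk.cons h1 (SimpleGraph.Walk.cons h2 SimpleGraph.Walk.nil))
      by_cases huq : u.1 * q = 0
      · -- u - q - v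
        have h1 : (zdGraph R).Adj u ⟨q, hqmem⟩ := by
          refine ⟨?_, huq⟩
          intro h
          have h' : (u : R) = q := h
          apply hadj
          rw [h']
          linear_combination hvq
        have h2 : (zdGraph R).Adj (⟨q, hqmem⟩ : zdStar R) v := by
          refine ⟨?_, by linear_combination hvq⟩
          intro h
          have h' : q = (v : R) := h
          apply hadj
          rw [← h']
          exact huq
        refine le_trans ?_ (by norm_num : (2:ℕ∞) ≤ 3)
        simpa using SimpleGraph.edist_le
          (SimpleGraph.Walk.cons h1 (SimpleGraph.Walk.cons h2 SimpleGraph.Walk.nil))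
      by_cases hpq : p * q = 0
      · -- u - p - q - v
        have h1 : (zdGraph R).Adj u ⟨p, hpmem⟩ := by
          refine ⟨?_, hup⟩
          intro h
          have h' : (u : R) = p := h
          apply huq
          rw [h']
          exact hpq
        have h2 : (zdGraph R).Adj (⟨p, hpmem⟩ : zdStar R) ⟨q, hqmem⟩ := by
          refine ⟨?_, hpq⟩
          intro h
          have h' : p = q := h
          apply hvp
          rw [h']
          exact hvq
        have h3 : (zdGraph R).Adj (⟨q, hqmem⟩ : zdStar R) v := by
          refine ⟨?_, by linear_combination hvq⟩
          intro h
          have h' : q = (v : R) := h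
          apply hvp
          rw [← h']
          linear_combination hpq
        refine le_trans ?_ (le_refl (3:ℕ∞))
        simpa using SimpleGraph.edist_le
          (SimpleGraph.Walk.cons h1 (SimpleGraph.Walk.cons h2
            (SimpleGraph.Walk.cons h3 SimpleGraph.Walk.nil)))
      · -- u - pq - v
        have hmmem : p * q ∈ zdStar R :=
          ⟨hpq, u.1, hu0, by linear_combination q * hup⟩
        have h1 : (zdGraph R).Adj u ⟨p * q, hmmem⟩ := by
          refine ⟨?_, by linear_combination q * hup⟩
          intro h
          have h' : (u : R) = p * q := h
          apply hadj
          rw [h']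
          linear_combination p * hvq
        have h2 : (zdGraph R).Adj (⟨p * q, hmmem⟩ : zdStar R) v := by
          refine ⟨?_, by linear_combination p * hvq⟩
          intro h
          have h' : p * q = (v : R) := h
          apply hadj
          rw [← h']
          linear_combination q * hup
        refine le_trans ?_ (by norm_num : (2:ℕ∞) ≤ 3)
        simpa using SimpleGraph.edist_le
          (SimpleGraph.Walk.cons h1 (SimpleGraph.Walk.cons h2 SimpleGraph.Walk.nil))
  -- Z(R) is not closed under addition.
  have hex : ∃ a b : R, a ∈ zdSet R ∧ b ∈ zdSet R ∧ a + b ∉ zdSet R := by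
    by_contra hcon
    push_neg at hcon
    apply hideal
    obtain ⟨y0, hy0⟩ := exists_ne (0 : R)
    refine ⟨{ carrier := zdSet R,
              add_mem' := fun {s t} hs ht => hcon s t hs ht,
              zero_mem' := ⟨y0, hy0, by ring⟩,
              smul_mem' := ?_ }, rfl⟩
    rintro c x ⟨y, hy, hxy⟩
    exact ⟨y, hy, by rw [smul_eq_mul]; linear_combination c * hxy⟩
  obtain ⟨a, b, ⟨ya, hya, haya⟩, ⟨yb, hyb, hbyb⟩, hr⟩ := hex
  have hreg : ∀ t : R, (a + b) * t = 0 → t = 0 := by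
    intro t ht
    by_contra ht0
    exact hr ⟨t, ht0, ht⟩
  have ha0 : a ≠ 0 := by
    rintro rfl
    exact hr ⟨yb, hyb, by linear_combination hbyb⟩
  have hb0 : b ≠ 0 := by
    rintro rfl
    exact hr ⟨ya, hya, by linear_combination haya⟩
  have hAB : ∀ t : R, t * a = 0 → t * b = 0 → t = 0 := fun t h1 h2 =>
    hreg t (by linear_combination h1 + h2)
  have haS : a ∈ zdStar R := ⟨ha0, ya, hya, haya⟩
  have hbS : b ∈ zdStar R := ⟨hb0, yb, hyb, hbyb⟩
  -- Lower bound: diameter is not ≤ 2.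
  have hlb : ¬ (zdGraph R).ediam ≤ 2 := by
    intro hd2
    -- common-annihilator property from diameter ≤ 2
    have star : ∀ x y : R, x ∈ zdStar R → y ∈ zdStar R → x ≠ y → x * y ≠ 0 →
        ∃ z : R, z ≠ 0 ∧ x * z = 0 ∧ y * z = 0 := by
      intro x y hx hy hne hxy
      have h2 : (zdGraph R).edist ⟨x, hx⟩ ⟨y, hy⟩ ≤ 2 :=
        le_trans SimpleGraph.edist_le_ediam hd2
      rcases edist_le_two_cases _ _ _ h2 with heq | hadj | ⟨z, h1, h2'⟩
      · exact absurd (congrArg Subtype.val heq) hne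
      · exact absurd hadj.2 hxy
      · exact ⟨z.1, z.2.1, h1.2, by rw [mul_comm]; exact h2'.2⟩
    -- a * b = 0
    have hab : a * b = 0 := by
      by_contra hab
      have hne : a ≠ b := by
        rintro rfl
        exact hr ⟨ya, hya, by linear_combination 2 * haya⟩
      obtain ⟨z, hz0, hz1, hz2⟩ := star a b haS hbS hne hab
      exact hz0 (hAB z (by linear_combination hz1) (by linear_combination hz2))
    by_cases hred : ∀ x : R, x * x = 0 → x = 0
    · -- Reduced case.
      have hb2 : b * b ≠ 0 := fun h => hb0 (hred b h)
      have ha2 : a * a ≠ 0 := fun h => ha0 (hred a h)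
      -- Every nonzero zero divisor kills a or b.
      have claimE : ∀ c : R, c ∈ zdStar R → c * a ≠ 0 → c * b = 0 := by
        intro c hcS hca
        by_contra hcb
        have hc0 : c ≠ 0 := hcS.1
        have hcnea : c ≠ a := fun h => hcb (by rw [h]; exact hab)
        have hcneb : c ≠ b := fun h => hca (by rw [h]; linear_combination hab)
        obtain ⟨z, hz0, hzc, hza⟩ := star c a hcS haS hcnea hca
        have hzb : z * b ≠ 0 := fun h => hz0 (hAB z (by linear_combination hza) h)
        obtain ⟨w, hw0, hwc, hwb⟩ := star c b hcS hbS hcneb hcb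
        have huz : (a + c * b) * z = 0 := by linear_combination hza + b * hzc
        have hvw : (b + c * a) * w = 0 := by linear_combination hwb + a * hwc
        have huv : (a + c * b) * (b + c * a) ≠ 0 := by
          intro h
          have h1 : (a + b) * (c * (a + b)) = 0 := by
            linear_combination h - (1 - c) * (1 - c) * hab
          have h2 : (a + b) * c = 0 := by linear_combination hreg _ h1
          exact hc0 (hreg c h2)
        have hvz : (b + c * a) * z ≠ 0 := by
          intro h
          apply hzb
          linear_combination h - c * hza
        have hunev : (a + c * b) ≠ (b + c * a) := fun h => hvz (by rw [← h]; exact huz)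
        have humem : (a + c * b) ∈ zdStar R :=
          ⟨fun h0 => huv (by rw [h0]; ring), z, hz0, huz⟩
        have hvmem : (b + c * a) ∈ zdStar R :=
          ⟨fun h0 => huv (by rw [h0]; ring), w, hw0, hvw⟩
        obtain ⟨t, ht0, htu, htv⟩ := star _ _ humem hvmem hunev huv
        have hta2 : t * (a * a) = 0 := by linear_combination a * htu - c * t * hab
        have htb2 : t * (b * b) = 0 := by linear_combination b * htv - c * t * hab
        have hta : t * a = 0 := hred (t * a) (by linear_combination t * hta2)
        have htb : t * b = 0 := hred (t * b) (by linear_combination t * htb2)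
        exact ht0 (hAB t hta htb)
      have claimE2 : ∀ c : R, c ∈ zdStar R → c * a = 0 ∨ c * b = 0 := by
        intro c hc
        by_cases h : c * a = 0
        · exact Or.inl h
        · exact Or.inr (claimE c hc h)
      -- Key primality lemma, symmetric in the two sides.
      have keyP : ∀ a' b' : R, a' * b' = 0 → (∀ t : R, t * a' = 0 → t * b' = 0 → t = 0) →
          (∀ c : R, c ∈ zdStar R → c * a' = 0 ∨ c * b' = 0) → (b' * b' ≠ 0) →
          ∀ x y : R, x * y * a' = 0 → x * a' ≠ 0 → y * a' ≠ 0 → False := by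
        intro a' b' hab' hAB' hE2 hb2' x y hxya hxa hya
        have hx0 : x ≠ 0 := fun h => hxa (by rw [h]; ring)
        have hy0 : y ≠ 0 := fun h => hya (by rw [h]; ring)
        have hyS : y ∈ zdStar R := ⟨hy0, x * a', hxa, by linear_combination hxya⟩
        have hyb : y * b' = 0 := (hE2 y hyS).resolve_left hya
        have hxS : x ∈ zdStar R := ⟨hx0, y * a', hya, by linear_combination hxya⟩
        have hxb : x * b' = 0 := (hE2 x hxS).resolve_left hxa
        have hxy : x * y = 0 := hAB' (x * y) hxya (by linear_combination x * hyb)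
        have hcS : x + b' ∈ zdStar R := by
          refine ⟨fun h => hxa ?_, y, hy0, by linear_combination hxy + hyb⟩
          linear_combination a' * h - hab'
        have hcb : (x + b') * b' = 0 := by
          rcases hE2 (x + b') hcS with h | h
          · exact absurd (by linear_combination h - hab' : x * a' = 0) hxa
          · exact h
        exact hb2' (by linear_combination hcb - hxb)
      -- Ann(a) and Ann(b) are prime ideals with trivial intersection.
      let IA : Ideal R :=
        { carrier := {t : R | t * a = 0},
          add_mem' := fun {s t} hs ht => show (s + t) * a = 0 by
            have hs' : s * a = 0 := hs
            have ht' : t * a = 0 := ht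
            linear_combination hs' + ht',
          zero_mem' := show (0 : R) * a = 0 by ring,
          smul_mem' := fun c x hx => show (c • x) * a = 0 by
            have hx' : x * a = 0 := hx
            rw [smul_eq_mul]
            linear_combination c * hx' }
      let IB : Ideal R :=
        { carrier := {t : R | t * b = 0},
          add_mem' := fun {s t} hs ht => show (s + t) * b = 0 by
            have hs' : s * b = 0 := hs
            have ht' : t * b = 0 := ht
            linear_combination hs' + ht',
          zero_mem' := show (0 : R) * b = 0 by ring,
          smul_mem' := fun c x hx => show (c • x) * b = 0 by
            have hx' : x * b = 0 := hx
            rw [smul_eq_mul]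
            linear_combination c * hx' }
      have hIA : IA.IsPrime := by
        constructor
        · intro h
          have h1 : (1 : R) ∈ IA := (Ideal.eq_top_iff_one IA).mp h
          have h1' : (1 : R) * a = 0 := h1
          exact ha0 (by linear_combination h1')
        · intro x y hxy
          by_contra hcon
          push_neg at hcon
          have hxa : x * a ≠ 0 := fun h => hcon.1 h
          have hya : y * a ≠ 0 := fun h => hcon.2 h
          exact keyP a b hab hAB claimE2 hb2 x y hxy hxa hya
      have hAB' : ∀ t : R, t * b = 0 → t * a = 0 → t = 0 := fun t h1 h2 => hAB t h2 h1
      have claimE2' : ∀ c : R, c ∈ zdStar R → c * b = 0 ∨ c * a = 0 :=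
        fun c hc => (claimE2 c hc).symm
      have hIB : IB.IsPrime := by
        constructor
        · intro h
          have h1 : (1 : R) ∈ IB := (Ideal.eq_top_iff_one IB).mp h
          have h1' : (1 : R) * b = 0 := h1
          exact hb0 (by linear_combination h1')
        · intro x y hxy
          by_contra hcon
          push_neg at hcon
          have hxb : x * b ≠ 0 := fun h => hcon.1 h
          have hyb : y * b ≠ 0 := fun h => hcon.2 h
          exact keyP b a (by linear_combination hab) hAB' claimE2' ha2 x y hxy hxb hyb
      -- R embeds into the product of the two domains R/IA × R/IB.
      apply hsub
      haveI := hIA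
      haveI := hIB
      refine ⟨R ⧸ IA, R ⧸ IB, inferInstance, inferInstance, inferInstance, inferInstance,
        RingHom.prod (Ideal.Quotient.mk IA) (Ideal.Quotient.mk IB), ?_⟩
      rw [injective_iff_map_eq_zero]
      intro x hx
      have h1 : Ideal.Quotient.mk IA x = 0 := congrArg Prod.fst hx
      have h2 : Ideal.Quotient.mk IB x = 0 := congrArg Prod.snd hx
      have h1' : x * a = 0 := Ideal.Quotient.eq_zero_iff_mem.mp h1
      have h2' : x * b = 0 := Ideal.Quotient.eq_zero_iff_mem.mp h2
      exact hAB x h1' h2'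
    · -- Non-reduced case: a square-zero element yields a contradiction.
      push_neg at hred
      obtain ⟨n, hnn, hn0⟩ := hred
      have key : ∀ a' b' m : R, a' ∈ zdStar R → a' * b' = 0 →
          (∀ t : R, t * a' = 0 → t * b' = 0 → t = 0) →
          m ≠ 0 → m * m = 0 → m * b' = 0 → False := by
        intro a' b' m ha'S hab' hAB' hm0 hmm hmb
        have hma : m * a' ≠ 0 := fun h => hm0 (hAB' m h hmb)
        have humem : m + b' ∈ zdStar R := by
          refine ⟨?_, m, hm0, by linear_combination hmm + hmb⟩
          intro h
          exact hma (by linear_combination a' * h - hab')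
        have hune : m + b' ≠ a' := by
          intro h
          apply hma
          have h2 : a' * m = 0 := by rw [← h]; linear_combination hmm + hmb
          linear_combination h2
        have hprod : (m + b') * a' ≠ 0 := by
          intro h
          exact hma (by linear_combination h - hab')
        obtain ⟨z, hz0, hz1, hz2⟩ := star (m + b') a' humem ha'S hune hprod
        have hzb : z * b' = 0 := by
          refine hAB' (z * b') (by linear_combination b' * hz2) ?_
          linear_combination b' * hz1 - z * hmb
        exact hz0 (hAB' z (by linear_combination hz2) hzb)
      by_cases hna : n * a = 0
      · have hAB2 : ∀ t : R, t * b = 0 → t * a = 0 → t = 0 := fun t h1 h2 => hAB t h2 h1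
        exact key b a n hbS (by linear_combination hab) hAB2 hn0 hnn hna
      · exact key a b (n * a) haS hab hAB hna
          (by linear_combination a * a * hnn) (by linear_combination n * hab)
  -- Conclude: the diameter equals 3.
  have h3 : (zdGraph R).ediam ≤ 3 := SimpleGraph.ediam_le_of_edist_le hub
  refine le_antisymm h3 ?_
  have hlt : (2 : ℕ∞) < (zdGraph R).ediam := not_le.mp hlb
  have h4 : (2 : ℕ∞) + 1 ≤ (zdGraph R).ediam := Order.add_one_le_of_lt hlt
  have h23 : (2 : ℕ∞) + 1 = 3 := by norm_num
  rwa [h23] at h4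
end

section
/- Let R be a commutative ring with identity. If Z(R)² = (0), i.e., xy = 0 for all zero-divisors x, y of R, then Z(R) is an ideal of R. -/
section

variable {R : Type*} [CommRing R]

theorem zero_mem_zdSet [Nontrivial R] : (0 : R) ∈ zdSet R :=
  ⟨1, one_ne_zero, zero_mul 1⟩

theorem mul_mem_zdSet_left (c : R) {x : R} (hx : x ∈ zdSet R) : c * x ∈ zdSet R := by
  obtain ⟨y, hy, hxy⟩ := hx
  exact ⟨y, hy, by rw [mul_assoc, hxy, mul_zero]⟩

/-- A nonzero `a` annihilates `a + b` because it kills both `a` and `b`. -/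
theorem add_mem_zdSet_of_mul_eq_zero (hsq : ∀ x ∈ zdSet R, ∀ y ∈ zdSet R, x * y = 0)
    {a b : R} (ha : a ∈ zdSet R) (hb : b ∈ zdSet R) : a + b ∈ zdSet R := by
  by_cases ha0 : a = 0
  · rwa [ha0, zero_add]
  · exact ⟨a, ha0, by rw [add_mul, hsq a ha a ha, hsq b hb a ha, add_zero]⟩

end

universe u

theorem stmt2 (R : Type u) [CommRing R] [Nontrivial R]
    (hsq : ∀ x ∈ zdSet R, ∀ y ∈ zdSet R, x * y = 0) :
    ∃ I : Ideal R, (I : Set R) = zdSet R :=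
  ⟨{ carrier := zdSet R
     zero_mem' := zero_mem_zdSet
     add_mem' := add_mem_zdSet_of_mul_eq_zero hsq
     smul_mem' := mul_mem_zdSet_left }, rfl⟩
end

section
/- Let R be a nontrivial commutative ring with identity such that Z(R) is an ideal of R and Z(R)² ≠ (0). If for each pair of distinct zero-divisors x, y of R one has ann(x,y) ≠ (0), then the diameter of the zero-divisor graph Γ(R) equals 2. -/
universe u

/-!
If `uv ≠ 0` for distinct vertices `u, v`, a common nonzero annihilator `a` of `u` and `v` is
itself a vertex, distinct from both, giving the path `u - a - v`; hence `diam Γ(R) ≤ 2`.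
Conversely `Γ(R)` is not complete: take `x, y ∈ Z(R)` with `xy ≠ 0`; if `x = y`, replace `y`
by `x + z` with `xz = 0`, `z ≠ 0`, which lies in `Z(R)` because `Z(R)` is an ideal.
-/

namespace SimpleGraph

variable {α : Type*} {G : SimpleGraph α}

lemma ediam_eq_two_of_le_two [Nontrivial α] (hle : G.ediam ≤ 2) (hG : G ≠ ⊤) :
    G.ediam = 2 := by
  obtain ⟨n, hn⟩ := ENat.ne_top_iff_exists.mp (ne_top_of_le_ne_top (by decide) hle)
  have h0 : n ≠ 0 := fun h => G.ediam_ne_zero (by simp [← hn, h])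
  have h1 : n ≠ 1 := fun h => hG (ediam_eq_one.mp (by simp [← hn, h]))
  have h2 : n ≤ 2 := by exact_mod_cast hn ▸ hle
  rw [← hn]
  norm_cast
  omega

end SimpleGraph

section ZeroDivisorGraph

variable {R : Type*} [CommRing R]

lemma zdGraph_edist_le_two_of_common_annihilator {u v : zdStar R} {a : R} (ha : a ≠ 0)
    (hau : a * u = 0) (hav : a * v = 0) : (zdGraph R).edist u v ≤ 2 := by
  by_cases huv : u.1 * v.1 = 0
  · rcases eq_or_ne u v with rfl | hne
    · simp
    have hadj : (zdGraph R).Adj u v := ⟨fun h => hne (Subtype.ext h), huv⟩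
    exact (SimpleGraph.edist_eq_one_iff_adj.mpr hadj).le.trans (by decide)
  · have haS : a ∈ zdStar R := ⟨ha, u, u.2.1, hau⟩
    have hua : (zdGraph R).Adj u ⟨a, haS⟩ :=
      ⟨by rintro rfl; exact huv hav, by rw [mul_comm]; exact hau⟩
    have hav' : (zdGraph R).Adj ⟨a, haS⟩ v :=
      ⟨by rintro rfl; exact huv (by rw [mul_comm]; exact hau), hav⟩
    simpa using (hua.toWalk.append hav'.toWalk).edist_le

lemma zdGraph_ediam_le_two
    (hann : ∀ x ∈ zdSet R, ∀ y ∈ zdSet R, x ≠ y →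
      ∃ a : R, a ≠ 0 ∧ a * x = 0 ∧ a * y = 0) :
    (zdGraph R).ediam ≤ 2 := by
  refine SimpleGraph.ediam_le_of_edist_le fun u v => ?_
  rcases eq_or_ne u v with rfl | hne
  · simp
  obtain ⟨a, ha, hau, hav⟩ := hann u u.2.2 v v.2.2 fun h => hne (Subtype.ext h)
  exact zdGraph_edist_le_two_of_common_annihilator ha hau hav

lemma exists_ne_not_adj_zdGraph (hideal : ∃ I : Ideal R, (I : Set R) = zdSet R)
    (hsq : ∃ x ∈ zdSet R, ∃ y ∈ zdSet R, x * y ≠ 0) :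
    ∃ u v : zdStar R, u ≠ v ∧ ¬(zdGraph R).Adj u v := by
  have vertex {x y : R} (hx : x ∈ zdSet R) (hxy : x * y ≠ 0) : x ∈ zdStar R :=
    ⟨left_ne_zero_of_mul hxy, hx⟩
  obtain ⟨x, hx, y, hy, hxy⟩ := hsq
  rcases eq_or_ne x y with rfl | hne
  · obtain ⟨z, hz, hxz⟩ := id hx
    obtain ⟨I, hI⟩ := hideal
    have hzS : z ∈ zdSet R := ⟨x, left_ne_zero_of_mul hxy, by rw [mul_comm, hxz]⟩
    have hxzS : x + z ∈ zdSet R := by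
      rw [← hI] at hx hzS ⊢
      exact I.add_mem hx hzS
    have hmul : x * (x + z) ≠ 0 := by rwa [mul_add, hxz, add_zero]
    refine ⟨⟨x, vertex hx hmul⟩, ⟨x + z, vertex hxzS (by rwa [mul_comm] at hmul)⟩, ?_,
      fun h => hmul h.2⟩
    simpa [Subtype.ext_iff] using hz
  · exact ⟨⟨x, vertex hx hxy⟩, ⟨y, vertex hy (by rwa [mul_comm] at hxy)⟩,
      fun h => hne (congrArg Subtype.val h), fun h => hxy h.2⟩

end ZeroDivisorGraph

theorem stmt5_general (R : Type u) [CommRing R]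
    (hideal : ∃ I : Ideal R, (I : Set R) = zdSet R)
    (hsq : ∃ x ∈ zdSet R, ∃ y ∈ zdSet R, x * y ≠ 0)
    (hann : ∀ x ∈ zdSet R, ∀ y ∈ zdSet R, x ≠ y → ∃ a : R, a ≠ 0 ∧ a * x = 0 ∧ a * y = 0) :
    (zdGraph R).ediam = 2 := by
  obtain ⟨u, v, hne, hnadj⟩ := exists_ne_not_adj_zdGraph hideal hsq
  have : Nontrivial (zdStar R) := nontrivial_of_ne u v hne
  exact SimpleGraph.ediam_eq_two_of_le_two (zdGraph_ediam_le_two hann)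
    (SimpleGraph.ne_top_iff_exists_not_adj.mpr ⟨u, v, hne, hnadj⟩)

theorem stmt5 (R : Type u) [CommRing R] [Nontrivial R]
    (hcard : (zdStar R).Nontrivial)
    (hideal : ∃ I : Ideal R, (I : Set R) = zdSet R)
    (hsq : ∃ x ∈ zdSet R, ∃ y ∈ zdSet R, x * y ≠ 0)
    (hann : ∀ x ∈ zdSet R, ∀ y ∈ zdSet R, x ≠ y → ∃ a : R, a ≠ 0 ∧ a * x = 0 ∧ a * y = 0) :
    (zdGraph R).ediam = 2 :=
  stmt5_general R hideal hsq hann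
end

section
/- Let R be a nontrivial commutative ring with identity that is not an integral domain. If R is isomorphic to a subring of a product of two integral domains and R is not isomorphic to ℤ/2ℤ × ℤ/2ℤ, then the diameter of the zero-divisor graph Γ(R) equals 2. -/
section aux
variable {R D₁ D₂ : Type*} [CommRing R] [CommRing D₁] [CommRing D₂]
  [IsDomain D₁] [IsDomain D₂]

lemma my_reduced (f : R →+* D₁ × D₂) (hf : Function.Injective f)
    {x : R} (hx : x * x = 0) : x = 0 := by
  have h : f x * f x = 0 := by rw [← map_mul, hx, map_zero]
  have h1 : (f x).1 * (f x).1 = 0 := congrArg Prod.fst h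
  have h2 : (f x).2 * (f x).2 = 0 := congrArg Prod.snd h
  have hx1 : (f x).1 = 0 := by rcases mul_eq_zero.mp h1 with h | h <;> exact h
  have hx2 : (f x).2 = 0 := by rcases mul_eq_zero.mp h2 with h | h <;> exact h
  apply hf
  rw [map_zero]
  exact Prod.ext hx1 hx2

lemma zd_coord (f : R →+* D₁ × D₂) (hf : Function.Injective f)
    {x : R} (hx : x ∈ zdStar R) : (f x).1 = 0 ∨ (f x).2 = 0 := by
  obtain ⟨hx0, y, hy0, hxy⟩ := hx
  have hfy : f y ≠ 0 := fun h => hy0 (hf (by rw [h, map_zero]))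
  have hprod : f x * f y = 0 := by rw [← map_mul, hxy, map_zero]
  have h1 : (f x).1 * (f y).1 = 0 := congrArg Prod.fst hprod
  have h2 : (f x).2 * (f y).2 = 0 := congrArg Prod.snd hprod
  rcases mul_eq_zero.mp h1 with h | h
  · exact Or.inl h
  rcases mul_eq_zero.mp h2 with h' | h'
  · exact Or.inr h'
  exact absurd (Prod.ext h h') hfy

lemma common_nbr (f : R →+* D₁ × D₂) (hf : Function.Injective f)
    {x y : R} (hx : x ∈ zdStar R) (hy : y ∈ zdStar R)
    (hx1 : (f x).1 = 0) (hy1 : (f y).1 = 0) :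
    ∃ z ∈ zdStar R, z ≠ x ∧ z ≠ y ∧ x * z = 0 ∧ y * z = 0 := by
  obtain ⟨hx0, a, ha0, hxa⟩ := hx
  obtain ⟨hy0, b, hb0, hyb⟩ := hy
  have hfx : f x ≠ 0 := fun h => hx0 (hf (by rw [h, map_zero]))
  have hfy : f y ≠ 0 := fun h => hy0 (hf (by rw [h, map_zero]))
  have hx2 : (f x).2 ≠ 0 := fun h => hfx (Prod.ext hx1 h)
  have hy2 : (f y).2 ≠ 0 := fun h => hfy (Prod.ext hy1 h)
  have hfa2 : (f a).2 = 0 := by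
    have h : (f x).2 * (f a).2 = 0 :=
      congrArg Prod.snd (show f x * f a = 0 by rw [← map_mul, hxa, map_zero])
    exact (mul_eq_zero.mp h).resolve_left hx2
  have hfb2 : (f b).2 = 0 := by
    have h : (f y).2 * (f b).2 = 0 :=
      congrArg Prod.snd (show f y * f b = 0 by rw [← map_mul, hyb, map_zero])
    exact (mul_eq_zero.mp h).resolve_left hy2
  have hfa1 : (f a).1 ≠ 0 := by
    intro h
    exact ha0 (hf (by rw [map_zero]; exact Prod.ext h hfa2))
  have hfb1 : (f b).1 ≠ 0 := by
    intro h
    exact hb0 (hf (by rw [map_zero]; exact Prod.ext h hfb2))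
  have hab1 : (f (a * b)).1 ≠ 0 := by
    rw [map_mul]
    exact mul_ne_zero hfa1 hfb1
  have hab0 : a * b ≠ 0 := by
    intro h
    rw [h, map_zero] at hab1
    exact hab1 rfl
  have hxz : x * (a * b) = 0 := by linear_combination b * hxa
  have hyz : y * (a * b) = 0 := by linear_combination a * hyb
  refine ⟨a * b, ⟨hab0, x, hx0, by linear_combination hxz⟩, ?_, ?_, hxz, hyz⟩
  · intro h
    rw [h, hx1] at hab1
    exact hab1 rfl
  · intro h
    rw [h, hy1] at hab1
    exact hab1 rfl

lemma complete_case [Nontrivial R] (f : R →+* D₁ × D₂) (hf : Function.Injective f)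
    {a b : R} (ha : a ≠ 0) (hb : b ≠ 0) (hab : a * b = 0)
    (hcomp : ∀ x y : R, x ∈ zdStar R → y ∈ zdStar R → x ≠ y → x * y = 0) :
    Nonempty (R ≃+* ZMod 2 × ZMod 2) := by
  set e := a with he_def
  have he_mem : e ∈ zdStar R := ⟨ha, b, hb, hab⟩
  -- e is idempotent
  have hcube : ∀ x : R, x * x * x = 0 → x = 0 := by
    intro x h
    apply my_reduced f hf
    apply my_reduced f hf
    linear_combination x * h
  have he2 : e * e = e := by
    by_contra h
    have hee_mem : (e * e) ∈ zdStar R := by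
      refine ⟨fun h0 => ha (my_reduced f hf h0), b, hb, by linear_combination e * hab⟩
    have := hcomp (e * e) e hee_mem he_mem h
    exact ha (hcube e (by linear_combination this))
  have h2e : e + e = 0 := by
    by_contra h
    have hmem : (e + e) ∈ zdStar R := ⟨h, b, hb, by linear_combination 2 * hab⟩
    have hne : e + e ≠ e := fun h' => ha (by linear_combination h')
    have h0 := hcomp (e + e) e hmem he_mem hne
    exact h (by linear_combination h0 - 2 * he2)
  set u : R := 1 - e with hu_def
  have hu0 : u ≠ 0 := by
    intro h
    have he1 : e = 1 := by linear_combination -h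
    exact hb (by linear_combination hab - b * he1)
  have hue : u * e = 0 := by rw [hu_def]; linear_combination -he2
  have heu : e * u = 0 := by linear_combination hue
  have huu : u * u = u := by rw [hu_def]; linear_combination he2
  have hu_mem : u ∈ zdStar R := ⟨hu0, e, ha, hue⟩
  have h2u : u + u = 0 := by
    by_contra h
    have hmem : (u + u) ∈ zdStar R := ⟨h, e, ha, by linear_combination 2 * hue⟩
    have hne : u + u ≠ u := fun h' => hu0 (by linear_combination h')
    have h0 := hcomp (u + u) u hmem hu_mem hne
    exact h (by linear_combination h0 - 2 * huu)
  have h1eu : e + u = 1 := by rw [hu_def]; ring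
  have h2 : (2 : R) = 0 := by linear_combination h2e + h2u
  -- all vertices are e or u
  have hvert : ∀ z ∈ zdStar R, z = e ∨ z = u := by
    intro z hz
    by_contra h
    push_neg at h
    have hze := hcomp z e hz he_mem h.1
    have hzu := hcomp z u hz hu_mem h.2
    exact hz.1 (by linear_combination hze + hzu - z * h1eu)
  have hre : ∀ r : R, r * e = 0 ∨ r * e = e := by
    intro r
    by_cases h0 : r * e = 0
    · exact Or.inl h0
    have hmem : r * e ∈ zdStar R := ⟨h0, u, hu0, by linear_combination r * heu⟩
    rcases hvert _ hmem with h | h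
    · exact Or.inr h
    · exfalso
      have h' : u * e = u := by rw [← h]; linear_combination r * he2
      exact hu0 (h'.symm.trans hue)
  have hru : ∀ r : R, r * u = 0 ∨ r * u = u := by
    intro r
    by_cases h0 : r * u = 0
    · exact Or.inl h0
    have hmem : r * u ∈ zdStar R := ⟨h0, e, ha, by linear_combination r * hue⟩
    rcases hvert _ hmem with h | h
    · exfalso
      have h' : e * u = e := by rw [← h]; linear_combination r * huu
      exact ha (h'.symm.trans heu)
    · exact Or.inr h
  -- characteristic 2
  haveI : CharP R (ringChar R) := ringChar.charP R
  have hdvd : ringChar R ∣ 2 := ringChar.dvd (by exact_mod_cast h2)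
  let c : ZMod 2 →+* R := ZMod.castHom hdvd R
  have hc1 : c 1 = 1 := map_one c
  have hc0 : c 0 = 0 := map_zero c
  have hz2 : ∀ z : ZMod 2, z = 0 ∨ z = 1 := by decide
  let F : ZMod 2 × ZMod 2 → R := fun p => c p.1 * e + c p.2 * u
  let φ : ZMod 2 × ZMod 2 →+* R :=
  { toFun := F,
    map_one' := by
      show c 1 * e + c 1 * u = 1
      rw [hc1]
      linear_combination h1eu
    map_mul' := fun p q => by
      show c (p.1 * q.1) * e + c (p.2 * q.2) * u
        = (c p.1 * e + c p.2 * u) * (c q.1 * e + c q.2 * u)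
      rw [map_mul, map_mul]
      linear_combination (- c p.1 * c q.1) * he2 + (- c p.2 * c q.2) * huu
        - (c p.1 * c q.2) * heu - (c p.2 * c q.1) * hue
    map_zero' := by
      show c 0 * e + c 0 * u = 0
      rw [hc0]; ring
    map_add' := fun p q => by
      show c (p.1 + q.1) * e + c (p.2 + q.2) * u
        = (c p.1 * e + c p.2 * u) + (c q.1 * e + c q.2 * u)
      rw [map_add, map_add]; ring }
  have hinj : Function.Injective φ := by
    rw [injective_iff_map_eq_zero]
    intro p hp
    have hp' : c p.1 * e + c p.2 * u = 0 := hp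
    have hpe : c p.1 * e = 0 := by
      linear_combination e * hp' - c p.1 * he2 - c p.2 * hue
    have hpu : c p.2 * u = 0 := by
      linear_combination u * hp' - c p.2 * huu - c p.1 * heu
    have h1 : p.1 = 0 := by
      rcases hz2 p.1 with h | h
      · exact h
      · rw [h, hc1, one_mul] at hpe
        exact absurd hpe ha
    have hq1 : p.2 = 0 := by
      rcases hz2 p.2 with h | h
      · exact h
      · rw [h, hc1, one_mul] at hpu
        exact absurd hpu hu0
    exact Prod.ext h1 hq1
  have hsurj : Function.Surjective φ := by
    intro r
    have hr : r = r * e + r * u := by linear_combination (-r) * h1eu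
    rcases hre r with h1 | h1 <;> rcases hru r with hq | hq
    · exact ⟨(0, 0), by show c 0 * e + c 0 * u = r; rw [hc0, hr, h1, hq]; ring⟩
    · exact ⟨(0, 1), by show c 0 * e + c 1 * u = r; rw [hc0, hc1, hr, h1, hq]; ring⟩
    · exact ⟨(1, 0), by show c 1 * e + c 0 * u = r; rw [hc0, hc1, hr, h1, hq]; ring⟩
    · exact ⟨(1, 1), by show c 1 * e + c 1 * u = r; rw [hc1, hr, h1, hq]; ring⟩
  exact ⟨(RingEquiv.ofBijective φ ⟨hinj, hsurj⟩).symm⟩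

end aux

universe u

theorem stmt7 (R : Type u) [CommRing R] [Nontrivial R]
    (hnd : ¬ IsDomain R)
    (hsub : ∃ (D₁ : Type u) (D₂ : Type u) (_ : CommRing D₁) (_ : CommRing D₂)
      (_ : IsDomain D₁) (_ : IsDomain D₂) (f : R →+* D₁ × D₂), Function.Injective f)
    (hne : ¬ Nonempty (R ≃+* (ZMod 2 × ZMod 2))) :
    (zdGraph R).ediam = 2 := by
  obtain ⟨D₁, D₂, _, _, _, _, f, hf⟩ := hsub
  -- R has a nontrivial zero divisor pair
  have hzd : ∃ a b : R, a ≠ 0 ∧ b ≠ 0 ∧ a * b = 0 := by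
    by_contra h
    push_neg at h
    haveI : NoZeroDivisors R := ⟨fun {x y} hxy => by
      by_contra hc
      push_neg at hc
      exact h x y hc.1 hc.2 hxy⟩
    exact hnd (NoZeroDivisors.to_isDomain R)
  obtain ⟨a, b, ha, hb, hab⟩ := hzd
  -- general upper bound: any two vertices are at distance ≤ 2
  have hbound : ∀ X Y : (zdStar R : Set R), (zdGraph R).edist X Y ≤ 2 := by
    intro X Y
    by_cases hXY : X = Y
    · rw [hXY, SimpleGraph.edist_self]; exact zero_le
    by_cases hadj : (zdGraph R).Adj X Y
    · rw [SimpleGraph.edist_eq_one_iff_adj.mpr hadj]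
      exact one_le_two
    have hne1 : X.1 ≠ Y.1 := fun h => hXY (Subtype.ext h)
    have hmul : X.1 * Y.1 ≠ 0 := fun h => hadj ⟨hne1, h⟩
    -- coordinates
    have hswap : Function.Injective ((RingEquiv.prodComm (R := D₁) (S := D₂)).toRingHom.comp f) :=
      (RingEquiv.prodComm (R := D₁) (S := D₂)).injective.comp hf
    have hcx := zd_coord f hf X.2
    have hcy := zd_coord f hf Y.2
    have hkey : ∃ z ∈ zdStar R, z ≠ X.1 ∧ z ≠ Y.1 ∧ X.1 * z = 0 ∧ Y.1 * z = 0 := by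
      rcases hcx with hcx | hcx <;> rcases hcy with hcy | hcy
      · exact common_nbr f hf X.2 Y.2 hcx hcy
      · exfalso
        apply hmul
        apply hf
        rw [map_zero, map_mul]
        exact Prod.ext (by simp [hcx]) (by simp [hcy])
      · exfalso
        apply hmul
        apply hf
        rw [map_zero, map_mul]
        exact Prod.ext (by simp [hcy]) (by simp [hcx])
      · exact common_nbr ((RingEquiv.prodComm (R := D₁) (S := D₂)).toRingHom.comp f) hswap
          X.2 Y.2 hcx hcy
    obtain ⟨z, hz, hzx, hzy, hxz, hyz⟩ := hkey
    let Z : (zdStar R : Set R) := ⟨z, hz⟩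
    have hadj1 : (zdGraph R).Adj X Z := ⟨fun h => hzx h.symm, hxz⟩
    have hadj2 : (zdGraph R).Adj Z Y := ⟨hzy, by rw [mul_comm]; exact hyz⟩
    have hw := SimpleGraph.Walk.edist_le
      (SimpleGraph.Walk.cons hadj1 (SimpleGraph.Walk.cons hadj2 SimpleGraph.Walk.nil))
    simpa using hw
  -- the graph is not complete
  have hnc : ∃ x y : R, x ∈ zdStar R ∧ y ∈ zdStar R ∧ x ≠ y ∧ x * y ≠ 0 := by
    by_contra h
    push_neg at h
    exact hne (complete_case f hf ha hb hab (fun x y hx hy hxy => h x y hx hy hxy))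
  obtain ⟨x, y, hx, hy, hxyne, hxy⟩ := hnc
  have hd2 : (zdGraph R).edist ⟨x, hx⟩ ⟨y, hy⟩ = 2 := by
    have hle := hbound ⟨x, hx⟩ ⟨y, hy⟩
    have h0 : (zdGraph R).edist ⟨x, hx⟩ ⟨y, hy⟩ ≠ 0 := by
      intro h
      exact hxyne (congrArg Subtype.val (SimpleGraph.edist_eq_zero_iff.mp h))
    have h1 : (zdGraph R).edist ⟨x, hx⟩ ⟨y, hy⟩ ≠ 1 := by
      intro h
      exact hxy (SimpleGraph.edist_eq_one_iff_adj.mp h).2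
    have htop : (zdGraph R).edist ⟨x, hx⟩ ⟨y, hy⟩ ≠ ⊤ :=
      ne_top_of_le_ne_top (by simp) hle
    lift (zdGraph R).edist ⟨x, hx⟩ ⟨y, hy⟩ to ℕ using htop with n hn
    norm_cast at hle h0 h1 ⊢
    omega
  refine le_antisymm (SimpleGraph.ediam_le_of_edist_le hbound) ?_
  rw [← hd2]
  exact SimpleGraph.edist_le_ediam
end

section
/- Let R be a Boolean ring with identity. If R is not isomorphic to ℤ/2ℤ × ℤ/2ℤ and R is not isomorphic to ℤ/2ℤ (equivalently, R has at least one nonzero zero-divisor and is not ℤ/2ℤ × ℤ/2ℤ), then the diameter of the zero-divisor graph Γ(R) equals 3. -/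
universe u

section Aux

variable {R : Type u} [CommRing R] [Nontrivial R]

private lemma val_mul_nat : ∀ a b : ZMod 2, (a * b).val = a.val * b.val := by decide

private lemma hz2 : ∀ a : ZMod 2, a = 0 ∨ a = 1 := by decide

private lemma val_add_R (h2 : (2 : R) = 0) :
    ∀ a b : ZMod 2, (((a + b).val : R)) = (a.val : R) + (b.val : R) := by
  intro a b
  rcases hz2 a with rfl | rfl <;> rcases hz2 b with rfl | rfl
  · simp
  · simp
  · simp
  · have h : (1 + 1 : ZMod 2) = 0 := by decide
    rw [h, ZMod.val_zero, ZMod.val_one]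
    push_cast
    linear_combination -h2

private lemma boolcase2 (h2 : (2 : R) = 0) (h : ∀ x : R, x = 0 ∨ x = 1) :
    Nonempty (R ≃+* ZMod 2) := by
  have hf : ∃ f : ZMod 2 →+* R, ∀ a, f a = (a.val : R) := by
    refine ⟨{ toFun := fun a => (a.val : R)
              map_one' := by
                show (((1 : ZMod 2).val : R)) = 1
                simp [ZMod.val_one]
              map_mul' := fun a b => by
                show (((a * b).val : R)) = ((a.val : R)) * ((b.val : R))
                rw [val_mul_nat]; push_cast; ring
              map_zero' := by
                show (((0 : ZMod 2).val : R)) = 0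
                simp
              map_add' := fun a b => val_add_R h2 a b }, fun a => rfl⟩
  obtain ⟨f, hfdef⟩ := hf
  have hinj : Function.Injective f := by
    intro a b hab
    rw [hfdef, hfdef] at hab
    rcases hz2 a with rfl | rfl <;> rcases hz2 b with rfl | rfl <;>
      simp only [ZMod.val_zero, ZMod.val_one, Nat.cast_zero, Nat.cast_one] at hab ⊢ <;>
      first
        | rfl
        | exact absurd hab zero_ne_one
        | exact absurd hab one_ne_zero
  have hsurj : Function.Surjective f := by
    intro r
    rcases h r with rfl | rfl
    · exact ⟨0, by rw [hfdef]; simp⟩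
    · exact ⟨1, by rw [hfdef]; simp [ZMod.val_one]⟩
  exact ⟨(RingEquiv.ofBijective f ⟨hinj, hsurj⟩).symm⟩

private lemma boolcase4 (h2 : (2 : R) = 0) {e : R} (he : e * e = e)
    (he0 : e ≠ 0) (he1 : e ≠ 1)
    (h : ∀ x : R, x = 0 ∨ x = 1 ∨ x = e ∨ x = 1 + e) :
    Nonempty (R ≃+* (ZMod 2 × ZMod 2)) := by
  have key : ∀ a b c d : R,
      (a * e + b * (1 + e)) * (c * e + d * (1 + e)) = (a * c) * e + (b * d) * (1 + e) := by
    intro a b c d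
    linear_combination (a*c + a*d + b*c + b*d) * he + ((a*d + b*c + b*d) * e) * h2
  have hf : ∃ f : ZMod 2 × ZMod 2 →+* R,
      ∀ p, f p = (p.1.val : R) * e + (p.2.val : R) * (1 + e) := by
    refine ⟨{ toFun := fun p => (p.1.val : R) * e + (p.2.val : R) * (1 + e)
              map_one' := by
                show (((1 : ZMod 2).val : R)) * e + (((1 : ZMod 2).val : R)) * (1 + e) = 1
                rw [ZMod.val_one]
                push_cast
                linear_combination e * h2
              map_mul' := fun p q => by
                show ((((p * q).1.val : R))) * e + ((((p * q).2.val : R))) * (1 + e) =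
                  ((p.1.val : R) * e + (p.2.val : R) * (1 + e)) *
                    ((q.1.val : R) * e + (q.2.val : R) * (1 + e))
                simp only [Prod.fst_mul, Prod.snd_mul, val_mul_nat]
                push_cast
                exact (key _ _ _ _).symm
              map_zero' := by
                show (((0 : ZMod 2).val : R)) * e + (((0 : ZMod 2).val : R)) * (1 + e) = 0
                simp
              map_add' := fun p q => by
                show ((((p + q).1.val : R))) * e + ((((p + q).2.val : R))) * (1 + e) =
                  ((p.1.val : R) * e + (p.2.val : R) * (1 + e)) +
                    ((q.1.val : R) * e + (q.2.val : R) * (1 + e))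
                simp only [Prod.fst_add, Prod.snd_add, val_add_R h2]
                ring }, fun p => rfl⟩
  obtain ⟨f, hfdef⟩ := hf
  have hinj : Function.Injective f := by
    rw [injective_iff_map_eq_zero]
    intro p hp
    rw [hfdef] at hp
    obtain ⟨a, b⟩ := p
    rcases hz2 a with rfl | rfl <;> rcases hz2 b with rfl | rfl <;>
      simp only [ZMod.val_zero, ZMod.val_one, Nat.cast_zero, Nat.cast_one,
        zero_mul, one_mul, add_zero, zero_add] at hp
    · rfl
    · exact absurd (by linear_combination hp - h2 : e = 1) he1
    · exact absurd hp he0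
    · exact absurd (by linear_combination hp - e * h2 : (1 : R) = 0) one_ne_zero
  have hsurj : Function.Surjective f := by
    intro r
    rcases h r with rfl | rfl | rfl | rfl
    · exact ⟨0, map_zero f⟩
    · exact ⟨1, map_one f⟩
    · exact ⟨(1, 0), by rw [hfdef]; simp [ZMod.val_one]⟩
    · exact ⟨(0, 1), by rw [hfdef]; simp [ZMod.val_one]⟩
  exact ⟨(RingEquiv.ofBijective f ⟨hinj, hsurj⟩).symm⟩

private lemma three_le_edist {V : Type*} (G : SimpleGraph V) {x y : V}
    (hxy : x ≠ y) (hadj : ¬ G.Adj x y) (hmid : ∀ w, ¬ (G.Adj x w ∧ G.Adj w y)) :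
    3 ≤ G.edist x y := by
  by_contra hlt
  push_neg at hlt
  obtain ⟨p, hp⟩ := SimpleGraph.exists_walk_of_edist_ne_top (ne_top_of_lt hlt)
  have hl : p.length < 3 := by
    have := hp ▸ hlt
    exact_mod_cast this
  cases p with
  | nil => exact hxy rfl
  | cons h q =>
    cases q with
    | nil => exact hadj h
    | cons h' q' =>
      have h0 : q'.length = 0 := by
        simp only [SimpleGraph.Walk.length_cons] at hl
        omega
      have heq := SimpleGraph.Walk.eq_of_length_eq_zero h0
      exact hmid _ ⟨h, heq ▸ h'⟩

end Aux

theorem stmt8 (R : Type u) [CommRing R] [Nontrivial R]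
    (hbool : ∀ x : R, x * x = x)
    (hne2 : ¬ Nonempty (R ≃+* (ZMod 2 × ZMod 2)))
    (hne1 : ¬ Nonempty (R ≃+* ZMod 2)) :
    (zdGraph R).ediam = 3 := by
  classical
  have h2 : (2 : R) = 0 := by linear_combination hbool 2
  have hvert : ∀ x : R, x ∈ zdStar R ↔ (x ≠ 0 ∧ x ≠ 1) := by
    intro x
    constructor
    · rintro ⟨hx0, y, hy0, hxy⟩
      refine ⟨hx0, ?_⟩
      rintro rfl
      rw [one_mul] at hxy
      exact hy0 hxy
    · rintro ⟨hx0, hx1⟩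
      refine ⟨hx0, 1 + x, ?_, ?_⟩
      · intro hc
        exact hx1 (by linear_combination hc - h2)
      · linear_combination hbool x + x * h2
  have hE : ∃ e : R, e ≠ 0 ∧ e ≠ 1 := by
    by_contra hcon
    push_neg at hcon
    refine hne1 (boolcase2 h2 ?_)
    intro x
    by_cases hx : x = 0
    · exact Or.inl hx
    · exact Or.inr (hcon x hx)
  obtain ⟨e, he0, he1⟩ := hE
  have hF : ∃ f : R, f ≠ 0 ∧ f ≠ 1 ∧ f ≠ e ∧ f ≠ 1 + e := by
    by_contra hcon
    push_neg at hcon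
    refine hne2 (boolcase4 h2 (hbool e) he0 he1 ?_)
    intro x
    by_cases h0 : x = 0
    · exact Or.inl h0
    by_cases h1 : x = 1
    · exact Or.inr (Or.inl h1)
    by_cases he : x = e
    · exact Or.inr (Or.inr (Or.inl he))
    · exact Or.inr (Or.inr (Or.inr (hcon x h0 h1 he)))
  obtain ⟨f, hf0, hf1, hfe, hfe1⟩ := hF
  have hXB : ∃ x b : R, x ≠ 0 ∧ x ≠ 1 ∧ b ≠ 0 ∧ b ≠ x ∧ x * b = b := by
    by_cases hef0 : e * f = 0
    · refine ⟨e + f, e, ?_, ?_, he0, ?_, ?_⟩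
      · intro hc
        exact hfe (by linear_combination hc - e * h2)
      · intro hc
        exact hfe1 (by linear_combination hc - e * h2)
      · intro hc
        exact hf0 (by linear_combination -hc)
      · linear_combination hbool e + hef0
    by_cases hefe : e * f = e
    · exact ⟨f, e, hf0, hf1, he0, fun hc => hfe hc.symm,
        by rw [mul_comm]; exact hefe⟩
    · refine ⟨e, e * f, he0, he1, hef0, hefe, ?_⟩
      linear_combination f * hbool e
  obtain ⟨x, b, hx0, hx1, hb0, hbx, hxb⟩ := hXB
  have hb1 : b ≠ 1 := by
    intro hc
    rw [hc, mul_one] at hxb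
    exact hx1 hxb
  have hy0 : (1 : R) + b ≠ 0 := fun hc => hb1 (by linear_combination hc - h2)
  have hy1 : (1 : R) + b ≠ 1 := fun hc => hb0 (by linear_combination hc)
  have hxy : x ≠ 1 + b := by
    intro hc
    exact hb0 (by linear_combination -b * hc + hxb - hbool b)
  have h1x0 : (1 : R) + x ≠ 0 := fun hc => hx1 (by linear_combination hc - h2)
  have h1x1 : (1 : R) + x ≠ 1 := fun hc => hx0 (by linear_combination hc)
  have hself : ∀ u : R, u * (1 + u) = 0 := fun u => by
    linear_combination hbool u + u * h2
  set X : zdStar R := ⟨x, (hvert x).mpr ⟨hx0, hx1⟩⟩ with hX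
  set Y : zdStar R := ⟨1 + b, (hvert _).mpr ⟨hy0, hy1⟩⟩ with hY
  set W1 : zdStar R := ⟨1 + x, (hvert _).mpr ⟨h1x0, h1x1⟩⟩ with hW1
  set B : zdStar R := ⟨b, (hvert b).mpr ⟨hb0, hb1⟩⟩ with hB
  have hadj1 : (zdGraph R).Adj X W1 := by
    refine ⟨?_, hself x⟩
    intro hc
    exact (one_ne_zero : (1 : R) ≠ 0) (by linear_combination -(hc : x = 1 + x))
  have hadj2 : (zdGraph R).Adj W1 B := by
    refine ⟨?_, ?_⟩
    · intro hc
      exact hb0 (by linear_combination -hxb - x * (hc : 1 + x = b) + hbool x + x * h2)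
    · show (1 + x) * b = 0
      linear_combination hxb + b * h2
  have hadj3 : (zdGraph R).Adj B Y := by
    refine ⟨?_, ?_⟩
    · intro hc
      exact (one_ne_zero : (1 : R) ≠ 0) (by linear_combination -(hc : b = 1 + b))
    · show b * (1 + b) = 0
      exact hself b
  have hdle : (zdGraph R).edist X Y ≤ 3 := by
    have h := SimpleGraph.edist_le (SimpleGraph.Walk.cons hadj1 (SimpleGraph.Walk.cons hadj2
      (SimpleGraph.Walk.cons hadj3 SimpleGraph.Walk.nil)))
    simp only [SimpleGraph.Walk.length_cons, SimpleGraph.Walk.length_nil] at h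
    exact_mod_cast h
  have hdge : 3 ≤ (zdGraph R).edist X Y := by
    apply three_le_edist
    · intro hc
      exact hxy (congrArg Subtype.val hc)
    · rintro ⟨-, hmul⟩
      have hmul' : x * (1 + b) = 0 := hmul
      exact hbx (by linear_combination -hmul' + hxb + b * h2)
    · rintro w ⟨⟨-, hxw⟩, ⟨-, hwy⟩⟩
      have hw0 : w.1 ≠ 0 := ((hvert w.1).mp w.2).1
      apply hw0
      have h1 : (1 + x) * b = 0 := by linear_combination hxb + b * h2
      have hxw' : x * w.1 = 0 := hxw
      have hwy' : w.1 * (1 + b) = 0 := hwy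
      linear_combination w.1 * h1 - b * hxw' + hwy' - w.1 * b * h2
  have hdeq : (zdGraph R).edist X Y = 3 := le_antisymm hdle hdge
  apply le_antisymm
  · apply SimpleGraph.ediam_le_of_edist_le
    rintro ⟨u, hu⟩ ⟨v, hv⟩
    obtain ⟨hu0, hu1⟩ := (hvert u).mp hu
    obtain ⟨hv0, hv1⟩ := (hvert v).mp hv
    by_cases huv : u = v
    · subst huv
      rw [SimpleGraph.edist_eq_zero_iff.mpr rfl]
      exact zero_le
    by_cases hadj : u * v = 0
    · have : (zdGraph R).edist ⟨u, hu⟩ ⟨v, hv⟩ = 1 :=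
        SimpleGraph.edist_eq_one_iff_adj.mpr ⟨huv, hadj⟩
      rw [this]
      norm_num
    by_cases hz : (1 + u) * (1 + v) = 0
    · have h1u0 : (1 : R) + u ≠ 0 := fun hc => hu1 (by linear_combination hc - h2)
      have h1u1 : (1 : R) + u ≠ 1 := fun hc => hu0 (by linear_combination hc)
      have h1v0 : (1 : R) + v ≠ 0 := fun hc => hv1 (by linear_combination hc - h2)
      have h1v1 : (1 : R) + v ≠ 1 := fun hc => hv0 (by linear_combination hc)
      have a1 : (zdGraph R).Adj ⟨u, hu⟩ ⟨1 + u, (hvert _).mpr ⟨h1u0, h1u1⟩⟩ := by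
        refine ⟨?_, hself u⟩
        intro hc
        exact (one_ne_zero : (1 : R) ≠ 0) (by linear_combination -(hc : u = 1 + u))
      have a2 : (zdGraph R).Adj ⟨1 + u, (hvert _).mpr ⟨h1u0, h1u1⟩⟩
          ⟨1 + v, (hvert _).mpr ⟨h1v0, h1v1⟩⟩ := by
        refine ⟨?_, hz⟩
        intro hc
        exact huv (by linear_combination (hc : 1 + u = 1 + v))
      have a3 : (zdGraph R).Adj ⟨1 + v, (hvert _).mpr ⟨h1v0, h1v1⟩⟩ ⟨v, hv⟩ := by
        refine ⟨?_, ?_⟩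
        · intro hc
          exact (one_ne_zero : (1 : R) ≠ 0) (by linear_combination (hc : 1 + v = v))
        · show (1 + v) * v = 0
          linear_combination hbool v + v * h2
      have hthis := SimpleGraph.edist_le (SimpleGraph.Walk.cons a1 (SimpleGraph.Walk.cons a2
          (SimpleGraph.Walk.cons a3 SimpleGraph.Walk.nil)))
      simp only [SimpleGraph.Walk.length_cons, SimpleGraph.Walk.length_nil] at hthis
      exact_mod_cast hthis
    · set z : R := (1 + u) * (1 + v) with hzdef
      have huz : u * z = 0 := by
        linear_combination (1 + v) * hbool u + ((1 + v) * u) * h2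
      have hvz : v * z = 0 := by
        linear_combination (1 + u) * hbool v + ((1 + u) * v) * h2
      have hz1 : z ≠ 1 := by
        intro hc
        apply hu0
        calc u = u * z := by rw [hc, mul_one]
        _ = 0 := huz
      have hznu : z ≠ u := by
        intro hc
        apply hu0
        rw [← hbool u]
        rw [hc] at huz
        exact huz
      have hznv : z ≠ v := by
        intro hc
        apply hv0
        rw [← hbool v]
        rw [hc] at hvz
        exact hvz
      have a1 : (zdGraph R).Adj ⟨u, hu⟩ ⟨z, (hvert z).mpr ⟨hz, hz1⟩⟩ :=
        ⟨fun hc => hznu hc.symm, huz⟩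
      have a2 : (zdGraph R).Adj ⟨z, (hvert z).mpr ⟨hz, hz1⟩⟩ ⟨v, hv⟩ :=
        ⟨hznv, by rw [mul_comm]; exact hvz⟩
      have hthis := SimpleGraph.edist_le
        (SimpleGraph.Walk.cons a1 (SimpleGraph.Walk.cons a2 SimpleGraph.Walk.nil))
      simp only [SimpleGraph.Walk.length_cons, SimpleGraph.Walk.length_nil] at hthis
      calc (zdGraph R).edist ⟨u, hu⟩ ⟨v, hv⟩ ≤ ((0 + 1 + 1 : ℕ) : ℕ∞) := hthis
      _ ≤ 3 := by norm_num
  · calc (3 : ℕ∞) = (zdGraph R).edist X Y := hdeq.symm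
    _ ≤ (zdGraph R).ediam := SimpleGraph.edist_le_ediam
end

section
/- Let R be a nontrivial commutative ring with identity having more than one nonzero zero-divisor. Then diam(Γ(R)) = 1 if and only if R is isomorphic to ℤ/2ℤ × ℤ/2ℤ or Z(R)² = (0). -/
open Classical in
lemma chi_exists {R : Type*} [CommRing R] (z : R) (hz : z * z = z) (hz0 : z ≠ 0)
    (h2z : z + z = 0) (hA : ∀ a : R, a * z = 0 ∨ a * z = z) :
    ∃ χ : R →+* ZMod 2, ∀ a : R, (a * z = z ↔ χ a = 1) ∧ (a * z = 0 ↔ χ a = 0) := by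
  have hz0' : (0 : R) ≠ z := Ne.symm hz0
  refine ⟨{ toFun := fun a => if a * z = z then 1 else 0
            map_one' := by simp
            map_mul' := ?_
            map_zero' := by simp [hz0']
            map_add' := ?_ }, ?_⟩
  · intro a b
    rcases hA a with ha | ha <;> rcases hA b with hb | hb <;>
      have hab : a * b * z = (a * z) * (b * z) := by
        rw [mul_assoc, mul_comm b, mul_assoc, ← mul_assoc z, hz, mul_comm z b, ← mul_assoc]
    all_goals simp [hab, ha, hb, hz0', hz]
  · intro a b
    rcases hA a with ha | ha <;> rcases hA b with hb | hb <;>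
      have hab : (a + b) * z = a * z + b * z := add_mul a b z
    · simp [hab, ha, hb, hz0']
    · simp [hab, ha, hb, hz0']
    · simp [hab, ha, hb, hz0']
    · have h1 : (a + b) * z = 0 := by rw [hab, ha, hb, h2z]
      have : ¬ ((a + b) * z = z) := by rw [h1]; exact hz0'
      simp only [ha, hb, this, if_neg, if_pos]
      decide
  · intro a
    rcases hA a with ha | ha
    · have : ¬ (a * z = z) := by rw [ha]; exact hz0'
      simp [ha, this, hz0']
    · simp [ha, hz0, Ne.symm hz0]

lemma iso_of_idem {R : Type*} [CommRing R] (x : R) (hsq : x * x = x)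
    (hx0 : x ≠ 0) (h1x0 : 1 - x ≠ 0)
    (hA : ∀ a : R, a * x = 0 ∨ a * x = x)
    (hB : ∀ a : R, a * (1 - x) = 0 ∨ a * (1 - x) = 1 - x) :
    Nonempty (R ≃+* (ZMod 2 × ZMod 2)) := by
  have h1sq : (1 - x) * (1 - x) = 1 - x := by linear_combination hsq
  have h2x : x + x = 0 := by
    rcases hA (1 + 1) with h | h
    · linear_combination h
    · exact absurd (by linear_combination h) hx0
  have h2x' : (1 - x) + (1 - x) = 0 := by
    rcases hB (1 + 1) with h | h
    · linear_combination h
    · exact absurd (by linear_combination h) h1x0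
  obtain ⟨χ1, hχ1⟩ := chi_exists x hsq hx0 h2x hA
  obtain ⟨χ2, hχ2⟩ := chi_exists (1 - x) h1sq h1x0 h2x' hB
  have hx1x : x * (1 - x) = 0 := by linear_combination -hsq
  have hinj : Function.Injective (χ1.prod χ2) := by
    intro a b hab
    have h1 : χ1 a = χ1 b := congrArg Prod.fst hab
    have h2 : χ2 a = χ2 b := congrArg Prod.snd hab
    have e1 : a * x = b * x := by
      rcases hA a with ha | ha <;> rcases hA b with hb | hb
      · rw [ha, hb]
      · exfalso
        rw [(hχ1 a).2.mp ha, (hχ1 b).1.mp hb] at h1; exact absurd h1 (by decide)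
      · exfalso
        rw [(hχ1 a).1.mp ha, (hχ1 b).2.mp hb] at h1; exact absurd h1 (by decide)
      · rw [ha, hb]
    have e2 : a * (1 - x) = b * (1 - x) := by
      rcases hB a with ha | ha <;> rcases hB b with hb | hb
      · rw [ha, hb]
      · exfalso
        rw [(hχ2 a).2.mp ha, (hχ2 b).1.mp hb] at h2; exact absurd h2 (by decide)
      · exfalso
        rw [(hχ2 a).1.mp ha, (hχ2 b).2.mp hb] at h2; exact absurd h2 (by decide)
      · rw [ha, hb]
    calc a = a * x + a * (1 - x) := by ring
    _ = b * x + b * (1 - x) := by rw [e1, e2]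
    _ = b := by ring
  have hsurj : Function.Surjective (χ1.prod χ2) := by
    have vx : (χ1.prod χ2) x = (1, 0) := by
      apply Prod.ext
      · exact (hχ1 x).1.mp hsq
      · exact (hχ2 x).2.mp hx1x
    have v1x : (χ1.prod χ2) (1 - x) = (0, 1) := by
      apply Prod.ext
      · exact (hχ1 (1 - x)).2.mp (by rw [mul_comm]; exact hx1x)
      · exact (hχ2 (1 - x)).1.mp h1sq
    rintro ⟨p1, p2⟩
    fin_cases p1 <;> fin_cases p2
    · exact ⟨0, by simp; rfl⟩
    · exact ⟨1 - x, v1x⟩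
    · exact ⟨x, vx⟩
    · exact ⟨1, by simp; rfl⟩
  exact ⟨RingEquiv.ofBijective (χ1.prod χ2) ⟨hinj, hsurj⟩⟩

universe u

theorem stmt9 (R : Type u) [CommRing R] [Nontrivial R]
    (hcard : (zdStar R).Nontrivial) :
    (zdGraph R).ediam = 1 ↔ (Nonempty (R ≃+* (ZMod 2 × ZMod 2)) ∨ (∀ x ∈ zdSet R, ∀ y ∈ zdSet R, x * y = 0)) := by
  have hnt : Nontrivial (zdStar R) := Set.nontrivial_coe_sort.mpr hcard
  rw [SimpleGraph.ediam_eq_one]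
  constructor
  · intro htop
    have key : ∀ a b : R, a ∈ zdStar R → b ∈ zdStar R → a ≠ b → a * b = 0 := by
      intro a b ha hb hab
      have h : (⊤ : SimpleGraph (zdStar R)).Adj ⟨a, ha⟩ ⟨b, hb⟩ := by
        simp [Subtype.ext_iff, hab]
      rw [← htop] at h
      exact (show _ ∧ a * b = 0 from h).2
    by_cases hz : ∀ x ∈ zdSet R, ∀ y ∈ zdSet R, x * y = 0
    · exact Or.inr hz
    left
    push_neg at hz
    obtain ⟨a, ha, b, hb, hab⟩ := hz
    have ha0 : a ≠ 0 := by rintro rfl; exact hab (zero_mul b)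
    have hb0 : b ≠ 0 := by rintro rfl; exact hab (mul_zero a)
    have haS : a ∈ zdStar R := ⟨ha0, ha⟩
    have hbS : b ∈ zdStar R := ⟨hb0, hb⟩
    have hab' : a = b := by
      by_contra hne
      exact hab (key a b haS hbS hne)
    subst hab'
    obtain ⟨y, hy0, hay⟩ := ha
    have hsq : a * a = a := by
      by_contra hne
      have haaS : a * a ∈ zdStar R := ⟨hab, y, hy0, by rw [mul_assoc, hay, mul_zero]⟩
      have h3 : (a * a) * a = 0 := key (a * a) a haaS haS hne
      have hz0 : a + a * a ≠ 0 := by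
        intro h0
        exact ha0 (by linear_combination (1 - a) * h0 + h3)
      have hzS : a + a * a ∈ zdStar R :=
        ⟨hz0, a * a, hab, by linear_combination (1 + a) * h3⟩
      have hzne : a + a * a ≠ a := fun h => hab (by linear_combination h)
      have h5 : (a + a * a) * a = 0 := key (a + a * a) a hzS haS hzne
      exact hab (by linear_combination h5 - h3)
    have ha1 : a ≠ 1 := by rintro rfl; rw [one_mul] at hay; exact hy0 hay
    have h1x0 : (1 : R) - a ≠ 0 := sub_ne_zero.mpr (Ne.symm ha1)
    have hax1 : a * (1 - a) = 0 := by linear_combination -hsq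
    have h1S : (1 : R) - a ∈ zdStar R := ⟨h1x0, a, ha0, by rw [mul_comm]; exact hax1⟩
    have hA : ∀ c : R, c * a = 0 ∨ c * a = a := by
      intro c
      by_contra hc
      push_neg at hc
      obtain ⟨hc0, hca⟩ := hc
      have hcS : c * a ∈ zdStar R := ⟨hc0, 1 - a, h1x0, by rw [mul_assoc, hax1, mul_zero]⟩
      have h6 := key (c * a) a hcS haS hca
      exact hc0 (by linear_combination h6 - c * hsq)
    have hB : ∀ c : R, c * (1 - a) = 0 ∨ c * (1 - a) = 1 - a := by
      intro c
      by_contra hc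
      push_neg at hc
      obtain ⟨hc0, hca⟩ := hc
      have hcS : c * (1 - a) ∈ zdStar R :=
        ⟨hc0, a, ha0, by rw [mul_assoc, mul_comm (1 - a) a, hax1, mul_zero]⟩
      have h6 := key (c * (1 - a)) (1 - a) hcS h1S hca
      exact hc0 (by linear_combination h6 - c * hsq)
    exact iso_of_idem a hsq ha0 h1x0 hA hB
  · intro h
    have key2 : ∀ a b : R, a ∈ zdStar R → b ∈ zdStar R → a ≠ b → a * b = 0 := by
      rcases h with he | hz
      · obtain ⟨e⟩ := he
        intro a b ha hb hab
        have dec : ∀ u v : ZMod 2 × ZMod 2, u ≠ 0 → v ≠ 0 →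
            (∃ w, w ≠ 0 ∧ u * w = 0) → (∃ w, w ≠ 0 ∧ v * w = 0) → u ≠ v → u * v = 0 := by
          intro u v
          fin_cases u <;> fin_cases v <;> decide
        obtain ⟨ya, hya0, haya⟩ := ha.2
        obtain ⟨yb, hyb0, hbyb⟩ := hb.2
        have e0 : ∀ r : R, e r = 0 → r = 0 := fun r h =>
          e.injective (h.trans (map_zero e).symm)
        apply e.injective
        rw [map_mul, map_zero]
        exact dec (e a) (e b) (fun h => ha.1 (e0 a h)) (fun h => hb.1 (e0 b h))
          ⟨e ya, fun h => hya0 (e0 ya h), by rw [← map_mul, haya, map_zero]⟩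
          ⟨e yb, fun h => hyb0 (e0 yb h), by rw [← map_mul, hbyb, map_zero]⟩
          (fun h => hab (e.injective h))
      · intro a b ha hb _
        exact hz a ha.2 b hb.2
    ext ⟨a, ha⟩ ⟨b, hb⟩
    simp only [zdGraph, SimpleGraph.top_adj, ne_eq, Subtype.mk.injEq]
    constructor
    · exact fun h => h.1
    · intro hne
      exact ⟨hne, key2 a b ha hb hne⟩
end

section
/- Let R be a nontrivial commutative McCoy ring with identity having more than one nonzero zero-divisor. Then diam(Γ(R)) = 2 if and only if either (i) R is isomorphic to a subring of a product of two integral domains and R is not isomorphic to ℤ/2ℤ × ℤ/2ℤ, or (ii) Z(R) is an ideal of R and Z(R)² ≠ (0). -/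
universe u

set_option linter.unusedSectionVars false
set_option maxHeartbeats 1000000

section Aux
variable {R : Type u} [CommRing R] [Nontrivial R]

lemma zdGraph_adj {x y : zdStar R} :
    (zdGraph R).Adj x y ↔ x.1 ≠ y.1 ∧ x.1 * y.1 = 0 := Iff.rfl

lemma edist_le_two_of_common {x y w : zdStar R}
    (h1 : (zdGraph R).Adj x w) (h2 : (zdGraph R).Adj w y) :
    (zdGraph R).edist x y ≤ 2 := by
  have := SimpleGraph.edist_le (SimpleGraph.Walk.cons h1 (SimpleGraph.Walk.cons h2 .nil))
  simpa using this

lemma twoPath {x y : zdStar R} (hle : (zdGraph R).edist x y ≤ 2)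
    (hne : x ≠ y) (hmul : x.1 * y.1 ≠ 0) :
    ∃ w : zdStar R, w.1 * x.1 = 0 ∧ w.1 * y.1 = 0 := by
  have h0 : (zdGraph R).edist x y ≠ 0 := fun h => hne (SimpleGraph.edist_eq_zero_iff.mp h)
  have h1 : (zdGraph R).edist x y ≠ 1 := fun h =>
    hmul ((SimpleGraph.edist_eq_one_iff_adj.mp h).2)
  have h2 : (zdGraph R).edist x y = 2 := by
    have htop : (zdGraph R).edist x y ≠ ⊤ := by
      intro h; rw [h] at hle; simp at hle
    lift (zdGraph R).edist x y to ℕ using htop with n hn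
    have : n ≤ 2 := by exact_mod_cast hle
    have h0' : n ≠ 0 := by exact_mod_cast h0
    have h1' : n ≠ 1 := by exact_mod_cast h1
    have : n = 2 := by omega
    exact_mod_cast this
  have h2' : (zdGraph R).edist x y = ((2 : ℕ) : ℕ∞) := by exact_mod_cast h2
  obtain ⟨p, hp⟩ := SimpleGraph.exists_walk_of_edist_eq_coe h2'
  cases p with
  | nil => simp at hp
  | cons hadj q =>
    cases q with
    | nil => simp at hp
    | cons hadj' q' =>
      cases q' with
      | nil =>
        rename_i w
        exact ⟨w, by rw [mul_comm]; exact hadj.2, hadj'.2⟩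
      | cons h'' q'' => simp [SimpleGraph.Walk.length_cons] at hp

lemma ediam_eq_two_of (hle : ∀ u v : zdStar R, (zdGraph R).edist u v ≤ 2)
    {u v : zdStar R} (hne : u ≠ v) (hnadj : ¬ (zdGraph R).Adj u v) :
    (zdGraph R).ediam = 2 := by
  refine le_antisymm (SimpleGraph.ediam_le_of_edist_le hle) ?_
  have h0 : (zdGraph R).edist u v ≠ 0 := fun h => hne (SimpleGraph.edist_eq_zero_iff.mp h)
  have h1 : (zdGraph R).edist u v ≠ 1 := fun h =>
    hnadj (SimpleGraph.edist_eq_one_iff_adj.mp h)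
  have h2le : (2 : ℕ∞) ≤ (zdGraph R).edist u v := by
    have htop : (zdGraph R).edist u v ≠ ⊤ := by
      intro h; have := hle u v; rw [h] at this; simp at this
    lift (zdGraph R).edist u v to ℕ using htop with n hn
    have h0' : n ≠ 0 := by exact_mod_cast h0
    have h1' : n ≠ 1 := by exact_mod_cast h1
    exact_mod_cast by omega
  exact h2le.trans SimpleGraph.edist_le_ediam

end Aux

set_option linter.unusedSectionVars false

section Aux2
variable {R : Type u} [CommRing R] [Nontrivial R]

/-- The annihilator of an element, as an ideal. -/
def annI (a : R) : Ideal R where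
  carrier := {x : R | x * a = 0}
  add_mem' := by
    intro x y hx hy
    simp only [Set.mem_setOf_eq] at *
    rw [add_mul, hx, hy, add_zero]
  zero_mem' := zero_mul a
  smul_mem' := by
    intro c x hx
    simp only [Set.mem_setOf_eq, smul_eq_mul] at *
    rw [mul_assoc, hx, mul_zero]

lemma mem_annI {a x : R} : x ∈ annI a ↔ x * a = 0 := Iff.rfl

lemma annI_prime (hle : ∀ u v : zdStar R, (zdGraph R).edist u v ≤ 2)
    {a b : R} (ha : a ≠ 0) (hb : b ≠ 0) (hab : a * b = 0)
    (hreg : ∀ w : R, w * a = 0 → w * b = 0 → w = 0) :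
    (annI a).IsPrime := by
  constructor
  · intro h
    have h1 : (1 : R) ∈ annI a := h ▸ Submodule.mem_top
    rw [mem_annI, one_mul] at h1
    exact ha h1
  · intro x y hxy
    rw [mem_annI] at hxy
    by_contra hcon
    push_neg at hcon
    obtain ⟨hxa, hya⟩ := hcon
    rw [mem_annI] at hxa hya
    have hxa2 : x * a * a ≠ 0 := by
      intro h
      exact hxa (hreg (x * a) h (by rw [mul_assoc, hab, mul_zero]))
    have hA : a ∈ zdStar R := ⟨ha, b, hb, hab⟩
    set c : R := x * a + b with hc
    have hcya : c * (y * a) = 0 := by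
      rw [hc]; linear_combination a * hxy + y * hab
    have hya0 : y * a ≠ 0 := hya
    have hc0 : c ≠ 0 := by
      intro h
      rw [hc] at h
      exact hxa2 (by linear_combination a * h - hab)
    have hC : c ∈ zdStar R := ⟨hc0, y * a, hya0, hcya⟩
    have hCA : c ≠ a := by
      intro h
      have hbb : b * b = 0 := by
        have h1 : c * b = a * b := by rw [h]
        rw [hc, hab] at h1
        linear_combination h1 - x * hab
      exact hb (hreg b (by rw [mul_comm]; exact hab) hbb)
    have hca : c * a ≠ 0 := by
      intro h
      rw [hc] at h
      exact hxa2 (by linear_combination h - hab)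
    obtain ⟨w, hw1, hw2⟩ := twoPath (hle ⟨c, hC⟩ ⟨a, hA⟩)
      (by simpa [Subtype.ext_iff] using hCA) (by simpa using hca)
    have hwb : w.1 * b = 0 := by
      have h1 : w.1 * c = 0 := hw1
      rw [hc] at h1
      linear_combination h1 - x * hw2
    exact w.2.1 (hreg w.1 hw2 hwb)

open Classical in
/-- The "indicator of the idempotent" ring hom to `ZMod 2`. -/
noncomputable def mkBoolHom (g : R) (hgg : g * g = g) (hg0 : g ≠ 0)
    (hkey : ∀ r : R, r * g = 0 ∨ r * g = g) : R →+* ZMod 2 where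
  toFun r := if r * g = g then 1 else 0
  map_one' := by
    show (if (1:R) * g = g then (1 : ZMod 2) else 0) = 1
    rw [if_pos (one_mul g)]
  map_zero' := by
    show (if (0:R) * g = g then (1 : ZMod 2) else 0) = 0
    rw [if_neg]
    rw [zero_mul]
    exact fun h => hg0 h.symm
  map_mul' r s := by
    show (if (r*s) * g = g then (1 : ZMod 2) else 0)
      = (if r * g = g then (1 : ZMod 2) else 0) * (if s * g = g then (1 : ZMod 2) else 0)
    rcases hkey r with h | h
    · have hrs : (r * s) * g = 0 := by linear_combination s * h
      rw [if_neg (by rw [hrs]; exact fun hh => hg0 hh.symm),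
        if_neg (by rw [h]; exact fun hh => hg0 hh.symm), zero_mul]
    · rcases hkey s with h' | h'
      · have hrs : (r * s) * g = 0 := by linear_combination r * h'
        rw [if_neg (by rw [hrs]; exact fun hh => hg0 hh.symm), if_pos h,
          if_neg (by rw [h']; exact fun hh => hg0 hh.symm), mul_zero]
      · have hrs : (r * s) * g = g := by linear_combination r * h' + h
        rw [if_pos hrs, if_pos h, if_pos h', mul_one]
  map_add' r s := by
    show (if (r+s) * g = g then (1 : ZMod 2) else 0)
      = (if r * g = g then (1 : ZMod 2) else 0) + (if s * g = g then (1 : ZMod 2) else 0)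
    have hgg2 : g + g = 0 := by
      rcases hkey (1 + 1) with h | h
      · linear_combination h
      · exact absurd (by linear_combination h : g = 0) hg0
    rcases hkey r with h | h <;> rcases hkey s with h' | h'
    · rw [if_neg (by rw [add_mul, h, h', add_zero]; exact fun hh => hg0 hh.symm),
        if_neg (by rw [h]; exact fun hh => hg0 hh.symm),
        if_neg (by rw [h']; exact fun hh => hg0 hh.symm), add_zero]
    · rw [if_pos (by rw [add_mul, h, h', zero_add]),
        if_neg (by rw [h]; exact fun hh => hg0 hh.symm), if_pos h', zero_add]
    · rw [if_pos (by rw [add_mul, h, h', add_zero]), if_pos h,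
        if_neg (by rw [h']; exact fun hh => hg0 hh.symm), add_zero]
    · rw [if_neg (by rw [add_mul, h, h', hgg2]; exact fun hh => hg0 hh.symm),
        if_pos h, if_pos h']
      decide

open Classical in
lemma mkBoolHom_apply (g : R) (hgg : g * g = g) (hg0 : g ≠ 0)
    (hkey : ∀ r : R, r * g = 0 ∨ r * g = g) (r : R) :
    mkBoolHom g hgg hg0 hkey r = if r * g = g then 1 else 0 := rfl

end Aux2

section Aux3
variable {R : Type u} [CommRing R] [Nontrivial R]

/-- In a subring of a product of two domains, two zero divisors which both vanish
in the first coordinate are at distance at most 2. -/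
lemma edist_le_two_fst {D₁ D₂ : Type*} [CommRing D₁] [CommRing D₂]
    [IsDomain D₁] [IsDomain D₂] (f : R →+* D₁ × D₂) (hf : Function.Injective f)
    (u v : zdStar R) (hu : (f u.1).1 = 0) (hv : (f v.1).1 = 0) :
    (zdGraph R).edist u v ≤ 2 := by
  have hf0 : ∀ z : R, f z = 0 → z = 0 := fun z hz => hf (by rw [hz, map_zero])
  obtain ⟨hu0, w, hw0, huw⟩ := u.2
  obtain ⟨hv0, _⟩ := v.2
  -- second coordinates of f u, f v are nonzero
  have hu2 : (f u.1).2 ≠ 0 := by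
    intro h
    exact hu0 (hf0 _ (Prod.ext hu h))
  have hv2 : (f v.1).2 ≠ 0 := by
    intro h
    exact hv0 (hf0 _ (Prod.ext hv h))
  -- the witness w has second coordinate 0, first coordinate nonzero
  have hfuw : (f u.1) * (f w) = 0 := by rw [← map_mul, huw, map_zero]
  have hw2 : (f w).2 = 0 := by
    have : (f u.1).2 * (f w).2 = 0 := congrArg Prod.snd hfuw
    rcases mul_eq_zero.mp this with h | h
    · exact absurd h hu2
    · exact h
  have hw1 : (f w).1 ≠ 0 := by
    intro h
    exact hw0 (hf0 _ (Prod.ext h hw2))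
  -- w annihilates v as well
  have hvw : v.1 * w = 0 := by
    apply hf0
    rw [map_mul]
    exact Prod.ext (by rw [Prod.fst_mul, hv, zero_mul]; rfl) (by rw [Prod.snd_mul, hw2, mul_zero]; rfl)
  have hWmem : w ∈ zdStar R := ⟨hw0, u.1, hu0, by rw [mul_comm]; exact huw⟩
  have hwu : w ≠ u.1 := by
    intro h
    rw [h] at hw1
    exact hw1 hu
  have hwv : w ≠ v.1 := by
    intro h
    rw [h] at hw1
    exact hw1 hv
  exact edist_le_two_of_common (w := ⟨w, hWmem⟩)
    (zdGraph_adj.mpr ⟨fun h => hwu h.symm, huw⟩)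
    (zdGraph_adj.mpr ⟨hwv, by rw [mul_comm]; exact hvw⟩)

/-- If the zero-divisor graph is complete and `R` embeds in a product of two domains,
then `R ≃+* ZMod 2 × ZMod 2`. -/
lemma iso_of_complete (hcard : (zdStar R).Nontrivial)
    (hred : ∀ z : R, z * z = 0 → z = 0)
    (hcomp : ∀ z w : R, z ∈ zdStar R → w ∈ zdStar R → z ≠ w → z * w = 0) :
    Nonempty (R ≃+* ZMod 2 × ZMod 2) := by
  classical
  obtain ⟨e, heZ, y, hyZ, hey⟩ := hcard
  have he0 : e ≠ 0 := heZ.1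
  obtain ⟨wit, hwit0, hewit⟩ := heZ.2
  -- e is idempotent
  have hee : e * e = e := by
    by_contra hne
    have heeZ : e * e ∈ zdStar R := by
      refine ⟨fun h => he0 (hred e h), wit, hwit0, ?_⟩
      rw [mul_assoc, hewit, mul_zero]
    have h3 : e * (e * e) = 0 := hcomp e (e * e) heZ heeZ (fun h => hne h.symm)
    have h4 : (e * e) * (e * e) = 0 := by linear_combination e * h3
    exact he0 (hred e (hred (e*e) h4))
  have he1 : e ≠ 1 := by
    intro h
    rw [h, one_mul] at hewit
    exact hwit0 hewit
  set e' : R := 1 - e with he'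
  have he'0 : e' ≠ 0 := sub_ne_zero.mpr (Ne.symm he1)
  have hee' : e * e' = 0 := by rw [he']; linear_combination -hee
  have he'e' : e' * e' = e' := by rw [he']; linear_combination hee
  have he'Z : e' ∈ zdStar R := ⟨he'0, e, he0, by rw [mul_comm]; exact hee'⟩
  -- key dichotomy
  have key : ∀ (g g' : R), g ∈ zdStar R → g' ≠ 0 → g * g' = 0 → g * g = g →
      ∀ r : R, r * g = 0 ∨ r * g = g := by
    intro g g' hgZ hg'0 hgg' hgg r
    by_cases h0 : r * g = 0
    · exact Or.inl h0
    · right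
      by_contra hne
      have hrgZ : r * g ∈ zdStar R := ⟨h0, g', hg'0, by rw [mul_assoc, hgg', mul_zero]⟩
      have := hcomp (r * g) g hrgZ hgZ hne
      exact h0 (by linear_combination this - r * hgg)
  have key₁ := key e e' heZ he'0 hee' hee
  have key₂ := key e' e he'Z he0 (by rw [mul_comm]; exact hee') he'e'
  set ψ₁ := mkBoolHom e hee he0 key₁ with hψ₁
  set ψ₂ := mkBoolHom e' he'e' he'0 key₂ with hψ₂
  set φ := ψ₁.prod ψ₂ with hφ
  have hφ_apply : ∀ r : R, φ r =
      ((if r * e = e then 1 else 0 : ZMod 2), (if r * e' = e' then 1 else 0 : ZMod 2)) :=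
    fun r => rfl
  have hinj : Function.Injective φ := by
    rw [injective_iff_map_eq_zero]
    intro r hr
    rw [hφ_apply, Prod.ext_iff] at hr
    obtain ⟨h1, h2⟩ := hr
    have hre : r * e = 0 := by
      rcases key₁ r with h | h
      · exact h
      · rw [if_pos h] at h1; exact absurd h1 one_ne_zero
    have hre' : r * e' = 0 := by
      rcases key₂ r with h | h
      · exact h
      · rw [if_pos h] at h2; exact absurd h2 one_ne_zero
    have : r * (e + e') = 0 := by rw [mul_add, hre, hre', add_zero]
    rw [he'] at this
    simpa using this
  have hsurj : Function.Surjective φ := by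
    intro p
    have hcases : ∀ q : ZMod 2 × ZMod 2, q = (0,0) ∨ q = (1,0) ∨ q = (0,1) ∨ q = (1,1) := by
      decide
    rcases hcases p with h | h | h | h
    · exact ⟨0, by rw [hφ_apply, h]; simp [Ne.symm he0, Ne.symm he'0]⟩
    · refine ⟨e, ?_⟩
      rw [hφ_apply, h, if_pos hee,
        if_neg (show ¬ e * e' = e' by rw [hee']; exact fun hh => he'0 hh.symm)]
    · refine ⟨e', ?_⟩
      rw [hφ_apply, h,
        if_neg (show ¬ e' * e = e by rw [mul_comm, hee']; exact fun hh => he0 hh.symm),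
        if_pos he'e']
    · exact ⟨1, by rw [hφ_apply, h, if_pos (one_mul e), if_pos (one_mul e')]⟩
  exact ⟨RingEquiv.ofBijective φ ⟨hinj, hsurj⟩⟩

end Aux3


theorem stmt12 (R : Type u) [CommRing R] [Nontrivial R]
    (hcard : (zdStar R).Nontrivial)
    (hmccoy : ∀ I : Ideal R, I.FG → (I : Set R) ⊆ zdSet R →
      ∃ a : R, a ≠ 0 ∧ ∀ x ∈ I, a * x = 0) :
    (zdGraph R).ediam = 2 ↔
      (((∃ (D₁ : Type u) (D₂ : Type u) (_ : CommRing D₁) (_ : CommRing D₂)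
      (_ : IsDomain D₁) (_ : IsDomain D₂) (f : R →+* D₁ × D₂), Function.Injective f) ∧ ¬ Nonempty (R ≃+* (ZMod 2 × ZMod 2))) ∨
       ((∃ I : Ideal R, (I : Set R) = zdSet R) ∧ (∃ x ∈ zdSet R, ∃ y ∈ zdSet R, x * y ≠ 0))) := by
  classical
  constructor
  · -- Forward direction
    intro h2
    have hle : ∀ u v : zdStar R, (zdGraph R).edist u v ≤ 2 := by
      intro u v
      rw [← h2]
      exact SimpleGraph.edist_le_ediam
    have hniso : ¬ Nonempty (R ≃+* (ZMod 2 × ZMod 2)) := by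
      rintro ⟨eq⟩
      have hkey : ∀ z : R, z ∈ zdStar R → eq z = (1,0) ∨ eq z = (0,1) := by
        intro z hz
        obtain ⟨hz0, w, hw0, hzw⟩ := hz
        have h1 : eq z ≠ 0 := fun h => hz0 (eq.injective (h.trans (map_zero eq).symm))
        have h2' : eq w ≠ 0 := fun h => hw0 (eq.injective (h.trans (map_zero eq).symm))
        have h3 : eq z * eq w = 0 := by rw [← map_mul, hzw, map_zero]
        have hdec : ∀ p q : ZMod 2 × ZMod 2, p ≠ 0 → q ≠ 0 → p * q = 0 →
            p = (1,0) ∨ p = (0,1) := by decide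
        exact hdec _ _ h1 h2' h3
      have hadj : ∀ u v : zdStar R, (zdGraph R).edist u v ≤ 1 := by
        intro u v
        by_cases huv : u = v
        · rw [huv, SimpleGraph.edist_self]; exact zero_le
        · have hne : u.1 ≠ v.1 := fun h => huv (Subtype.ext h)
          have h4 : eq u.1 ≠ eq v.1 := fun h => hne (eq.injective h)
          have hmul : u.1 * v.1 = 0 := by
            rcases hkey u.1 u.2 with h5 | h5 <;> rcases hkey v.1 v.2 with h6 | h6
            · exact absurd (h5.trans h6.symm) h4
            · apply eq.injective; rw [map_mul, h5, h6, map_zero]; decide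
            · apply eq.injective; rw [map_mul, h5, h6, map_zero]; decide
            · exact absurd (h5.trans h6.symm) h4
          exact le_of_eq (SimpleGraph.edist_eq_one_iff_adj.mpr ⟨hne, hmul⟩)
      have hd1 : (zdGraph R).ediam ≤ 1 := SimpleGraph.ediam_le_of_edist_le hadj
      rw [h2] at hd1
      exact absurd hd1 (by decide)
    by_cases hadd : ∀ x ∈ zdSet R, ∀ y ∈ zdSet R, x + y ∈ zdSet R
    · right
      constructor
      · refine ⟨{ carrier := zdSet R
                  add_mem' := ?_
                  zero_mem' := ?_
                  smul_mem' := ?_ }, rfl⟩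
        · exact fun hu hv => hadd _ hu _ hv
        · exact ⟨1, one_ne_zero, zero_mul 1⟩
        · intro c z hz
          obtain ⟨w, hw, hzw⟩ := hz
          exact ⟨w, hw, by rw [smul_eq_mul, mul_assoc, hzw, mul_zero]⟩
      · by_contra hz2
        push_neg at hz2
        have hadj : ∀ u v : zdStar R, (zdGraph R).edist u v ≤ 1 := by
          intro u v
          by_cases huv : u = v
          · rw [huv, SimpleGraph.edist_self]; exact zero_le
          · have hne : u.1 ≠ v.1 := fun h => huv (Subtype.ext h)
            exact le_of_eq (SimpleGraph.edist_eq_one_iff_adj.mpr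
              ⟨hne, hz2 u.1 u.2.2 v.1 v.2.2⟩)
        have hd1 : (zdGraph R).ediam ≤ 1 := SimpleGraph.ediam_le_of_edist_le hadj
        rw [h2] at hd1
        exact absurd hd1 (by decide)
    · left
      push_neg at hadd
      obtain ⟨a, haZ, b, hbZ, hab⟩ := hadd
      have ha0 : a ≠ 0 := by rintro rfl; rw [zero_add] at hab; exact hab hbZ
      have hb0 : b ≠ 0 := by rintro rfl; rw [add_zero] at hab; exact hab haZ
      have hreg : ∀ w : R, w * a = 0 → w * b = 0 → w = 0 := by
        intro w h1 h2'
        by_contra hw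
        exact hab ⟨w, hw, by rw [add_mul, mul_comm a w, mul_comm b w, h1, h2', add_zero]⟩
      have hne : a ≠ b := by
        rintro rfl
        obtain ⟨w, hw0, haw⟩ := haZ
        exact hab ⟨w, hw0, by rw [add_mul, haw, add_zero]⟩
      have habmul : a * b = 0 := by
        by_contra hmul
        obtain ⟨w, hw1, hw2⟩ := twoPath (hle ⟨a, ha0, haZ⟩ ⟨b, hb0, hbZ⟩)
          (fun h => hne (congrArg Subtype.val h)) hmul
        exact w.2.1 (hreg w.1 hw1 hw2)
      have hP1 : (annI a).IsPrime := annI_prime hle ha0 hb0 habmul hreg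
      have hP2 : (annI b).IsPrime := annI_prime hle hb0 ha0
        (by rw [mul_comm]; exact habmul) (fun w h1 h2' => hreg w h2' h1)
      refine ⟨⟨R ⧸ annI a, R ⧸ annI b, inferInstance, inferInstance, inferInstance,
        inferInstance, (Ideal.Quotient.mk (annI a)).prod (Ideal.Quotient.mk (annI b)), ?_⟩, hniso⟩
      rw [injective_iff_map_eq_zero]
      intro z hz
      rw [RingHom.prod_apply, Prod.mk_eq_zero] at hz
      exact hreg z (Ideal.Quotient.eq_zero_iff_mem.mp hz.1)
        (Ideal.Quotient.eq_zero_iff_mem.mp hz.2)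
  · -- Backward direction
    rintro (⟨⟨D₁, D₂, _, _, _, _, f, hf⟩, hniso⟩ | ⟨⟨I, hI⟩, x, hx, y, hy, hxy⟩)
    · -- case (i)
      have hcoord : ∀ u : zdStar R, (f u.1).1 = 0 ∨ (f u.1).2 = 0 := by
        intro u
        obtain ⟨hu0, w, hw0, huw⟩ := u.2
        by_contra hcon
        push_neg at hcon
        have hfw : f u.1 * f w = 0 := by rw [← map_mul, huw, map_zero]
        have h1 : (f u.1).1 * (f w).1 = 0 := congrArg Prod.fst hfw
        have h2 : (f u.1).2 * (f w).2 = 0 := congrArg Prod.snd hfw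
        have hw1 : (f w).1 = 0 := (mul_eq_zero.mp h1).resolve_left hcon.1
        have hw2 : (f w).2 = 0 := (mul_eq_zero.mp h2).resolve_left hcon.2
        exact hw0 (hf (show f w = f 0 by rw [map_zero]; exact Prod.ext hw1 hw2))
      have hf' : Function.Injective
          ((RingEquiv.prodComm : D₁ × D₂ ≃+* D₂ × D₁).toRingHom.comp f) :=
        fun r s h => hf ((RingEquiv.prodComm : D₁ × D₂ ≃+* D₂ × D₁).injective h)
      have hle : ∀ u v : zdStar R, (zdGraph R).edist u v ≤ 2 := by
        intro u v
        by_cases huv : u = v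
        · rw [huv, SimpleGraph.edist_self]; exact zero_le
        have hne : u.1 ≠ v.1 := fun h => huv (Subtype.ext h)
        have hmix : ∀ p q : zdStar R, (f p.1).1 = 0 → (f q.1).2 = 0 → p.1 * q.1 = 0 := by
          intro p q hp hq
          apply hf
          rw [map_mul, map_zero]
          exact Prod.ext (by rw [Prod.fst_mul, hp, zero_mul]; rfl)
            (by rw [Prod.snd_mul, hq, mul_zero]; rfl)
        rcases hcoord u with hu | hu <;> rcases hcoord v with hv | hv
        · exact edist_le_two_fst f hf u v hu hv
        · exact (le_of_eq (SimpleGraph.edist_eq_one_iff_adj.mpr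
            (zdGraph_adj.mpr ⟨hne, hmix u v hu hv⟩))).trans (by decide)
        · exact (le_of_eq (SimpleGraph.edist_eq_one_iff_adj.mpr
            (zdGraph_adj.mpr ⟨hne, by rw [mul_comm]; exact hmix v u hv hu⟩))).trans (by decide)
        · exact edist_le_two_fst
            ((RingEquiv.prodComm : D₁ × D₂ ≃+* D₂ × D₁).toRingHom.comp f) hf' u v hu hv
      by_cases hex : ∃ u v : zdStar R, u ≠ v ∧ ¬ (zdGraph R).Adj u v
      · obtain ⟨u, v, h1, h2⟩ := hex
        exact ediam_eq_two_of hle h1 h2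
      · exfalso
        push_neg at hex
        apply hniso
        apply iso_of_complete hcard
        · intro z hzz
          apply hf
          rw [map_zero]
          have h1 : (f z).1 * (f z).1 = 0 := by
            have : f z * f z = 0 := by rw [← map_mul, hzz, map_zero]
            exact congrArg Prod.fst this
          have h2 : (f z).2 * (f z).2 = 0 := by
            have : f z * f z = 0 := by rw [← map_mul, hzz, map_zero]
            exact congrArg Prod.snd this
          exact Prod.ext (mul_self_eq_zero.mp h1) (mul_self_eq_zero.mp h2)
        · intro z w hzZ hwZ hzw
          exact (hex ⟨z, hzZ⟩ ⟨w, hwZ⟩ (fun h => hzw (congrArg Subtype.val h))).2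
    · -- case (ii)
      have hx0 : x ≠ 0 := fun h => hxy (by rw [h, zero_mul])
      have hy0 : y ≠ 0 := fun h => hxy (by rw [h, mul_zero])
      have hle : ∀ u v : zdStar R, (zdGraph R).edist u v ≤ 2 := by
        intro u v
        by_cases huv : u = v
        · rw [huv, SimpleGraph.edist_self]; exact zero_le
        have hne : u.1 ≠ v.1 := fun h => huv (Subtype.ext h)
        by_cases hm : u.1 * v.1 = 0
        · exact (le_of_eq (SimpleGraph.edist_eq_one_iff_adj.mpr
            (zdGraph_adj.mpr ⟨hne, hm⟩))).trans (by decide)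
        · have hspan : ((Ideal.span {u.1, v.1} : Ideal R) : Set R) ⊆ zdSet R := by
            rw [← hI]
            exact_mod_cast Ideal.span_le.mpr (by
              rintro z (rfl | rfl)
              · show u.1 ∈ (I : Set R); rw [hI]; exact u.2.2
              · show v.1 ∈ (I : Set R); rw [hI]; exact v.2.2)
          obtain ⟨c, hc0, hcann⟩ := hmccoy _
            (Submodule.fg_span ((Set.finite_singleton v.1).insert u.1)) hspan
          have hcu : c * u.1 = 0 := hcann _ (Ideal.subset_span (Set.mem_insert _ _))
          have hcv : c * v.1 = 0 := hcann _
            (Ideal.subset_span (Set.mem_insert_of_mem _ rfl))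
          have hcZ : c ∈ zdStar R := ⟨hc0, u.1, u.2.1, hcu⟩
          have hcu' : c ≠ u.1 := fun h => hm (by rw [← h]; exact hcv)
          have hcv' : c ≠ v.1 := fun h => hm (by rw [mul_comm, ← h]; exact hcu)
          exact edist_le_two_of_common (w := ⟨c, hcZ⟩)
            (zdGraph_adj.mpr ⟨fun h => hcu' h.symm, by rw [mul_comm]; exact hcu⟩)
            (zdGraph_adj.mpr ⟨hcv', hcv⟩)
      have hxZ : x ∈ zdStar R := ⟨hx0, hx⟩
      have hyZ : y ∈ zdStar R := ⟨hy0, hy⟩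
      by_cases hxy' : x = y
      · subst hxy'
        by_cases hex : ∃ u v : zdStar R, u ≠ v ∧ ¬ (zdGraph R).Adj u v
        · obtain ⟨u, v, h1', h2'⟩ := hex
          exact ediam_eq_two_of hle h1' h2'
        · exfalso
          push_neg at hex
          have hcomp : ∀ z w : R, z ∈ zdStar R → w ∈ zdStar R → z ≠ w → z * w = 0 :=
            fun z w hzZ hwZ hzw =>
              (hex ⟨z, hzZ⟩ ⟨w, hwZ⟩ (fun h => hzw (congrArg Subtype.val h))).2
          have hxI : x ∈ I := by
            show x ∈ (I : Set R); rw [hI]; exact hx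
          by_cases hpp : x * x = x
          · have h1x : (1 - x) ∈ I := by
              show (1 - x) ∈ (I : Set R)
              rw [hI]
              exact ⟨x, hx0, by linear_combination -hpp⟩
            have h1mem : (1 : R) ∈ I := by
              have := I.add_mem h1x hxI
              rwa [sub_add_cancel] at this
            have h1Z : (1 : R) ∈ zdSet R := by rw [← hI]; exact h1mem
            obtain ⟨w, hw0, h1w⟩ := h1Z
            rw [one_mul] at h1w
            exact hw0 h1w
          · obtain ⟨w, hw0, hxw⟩ := hx
            have hxxZ : x * x ∈ zdStar R :=
              ⟨hxy, w, hw0, by rw [mul_assoc, hxw, mul_zero]⟩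
            have h3 : x * (x * x) = 0 := hcomp x (x * x) hxZ hxxZ (fun h => hpp h.symm)
            have hq0 : x + x * x ≠ 0 := by
              intro hq
              exact hxy (by linear_combination x * hq - h3)
            have hqI : x + x * x ∈ I := I.add_mem hxI (I.mul_mem_left x hxI)
            have hqZ : x + x * x ∈ zdSet R := by rw [← hI]; exact hqI
            obtain ⟨w', hw'0, hqw⟩ := hqZ
            have hqZs : x + x * x ∈ zdStar R := ⟨hq0, w', hw'0, hqw⟩
            have hqx : x + x * x ≠ x := by
              intro h
              exact hxy (by linear_combination h)
            have h4 : (x + x * x) * x = 0 := hcomp _ x hqZs hxZ hqx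
            exact hxy (by linear_combination h4 - h3)
      · exact ediam_eq_two_of hle (u := ⟨x, hxZ⟩) (v := ⟨y, hyZ⟩)
          (fun h => hxy' (congrArg Subtype.val h))
          (fun hadj => hxy (zdGraph_adj.mp hadj).2)
end
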